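/- arXiv:1308.6621 — 2 statements merged into one kernel-verified Lean document; each statement's English description precedes it below -/
import Mathlib

section
/- With the convention π_0 = 0, for 1 ≤ m ≤ n-1, the number of permutations of {1,...,n} with peak set exactly {n-m} equals Σ_{i=0}^{m-1} 2^i·C(n-(m-i), i+1). -/
open Finset

/-- Value at (1-indexed) position `i` of the signed permutation represented by a pair
`(σ, ε)`: the value is `±(σ(i)+1)`, negative iff `ε i = true`. Returns 0 out of range. -/
def bval (n : ℕ) (π : Equiv.Perm (Fin n) × (Fin n → Bool)) (i : ℕ) : ℤ :=
  if h : i - 1 < n then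
    (if π.2 ⟨i - 1, h⟩ then (-1 : ℤ) else 1) * (((π.1 ⟨i - 1, h⟩ : ℕ) : ℤ) + 1)
  else 0

/-- Peak set of a signed permutation: positions `i ∈ {2,…,n-1}` with `π_{i-1} < π_i > π_{i+1}`. -/
def bPeakSet (n : ℕ) (π : Equiv.Perm (Fin n) × (Fin n → Bool)) : Finset ℕ :=
  (Finset.Icc 2 (n - 1)).filter fun i =>
    bval n π (i - 1) < bval n π i ∧ bval n π (i + 1) < bval n π i

/-- `#P_B(S,n)`: number of signed permutations in `B_n` with peak set exactly `S`. -/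
def PB (n : ℕ) (S : Finset ℕ) : ℕ :=
  (Finset.univ.filter fun π : Equiv.Perm (Fin n) × (Fin n → Bool) => bPeakSet n π = S).card

/-- Value with the convention `π_0 = 0`. -/
def bvalHat (n : ℕ) (π : Equiv.Perm (Fin n) × (Fin n → Bool)) (i : ℕ) : ℤ :=
  if i = 0 then 0 else bval n π i

/-- Peak set with `π_0 = 0`: positions `i ∈ {1,…,n-1}` with `π_{i-1} < π_i > π_{i+1}`. -/
def bPeakSetHat (n : ℕ) (π : Equiv.Perm (Fin n) × (Fin n → Bool)) : Finset ℕ :=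
  (Finset.Icc 1 (n - 1)).filter fun i =>
    bvalHat n π (i - 1) < bvalHat n π i ∧ bvalHat n π (i + 1) < bvalHat n π i

/-- `#P̂_B(S,n)`: signed permutations with `π_0 = 0` prepended and peak set exactly `S`. -/
def PBhat (n : ℕ) (S : Finset ℕ) : ℕ :=
  (Finset.univ.filter fun π : Equiv.Perm (Fin n) × (Fin n → Bool) => bPeakSetHat n π = S).card

/-- Value at (1-indexed) position `i` of an ordinary permutation of `{1,…,n}`. -/
def sval (n : ℕ) (π : Equiv.Perm (Fin n)) (i : ℕ) : ℤ :=
  if h : i - 1 < n then ((π ⟨i - 1, h⟩ : ℕ) : ℤ) + 1 else 0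

/-- Peak set of an ordinary permutation: positions `i ∈ {2,…,n-1}`. -/
def sPeakSet (n : ℕ) (π : Equiv.Perm (Fin n)) : Finset ℕ :=
  (Finset.Icc 2 (n - 1)).filter fun i =>
    sval n π (i - 1) < sval n π i ∧ sval n π (i + 1) < sval n π i

/-- `#P(S,n)`: number of permutations of `{1,…,n}` with peak set exactly `S`. -/
def PP (n : ℕ) (S : Finset ℕ) : ℕ :=
  (Finset.univ.filter fun π : Equiv.Perm (Fin n) => sPeakSet n π = S).card

def svalHat (n : ℕ) (π : Equiv.Perm (Fin n)) (i : ℕ) : ℤ :=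
  if i = 0 then 0 else sval n π i

/-- Peak set with the convention `π_0 = 0`: positions `i ∈ {1,…,n-1}`. -/
def sPeakSetHat (n : ℕ) (π : Equiv.Perm (Fin n)) : Finset ℕ :=
  (Finset.Icc 1 (n - 1)).filter fun i =>
    svalHat n π (i - 1) < svalHat n π i ∧ svalHat n π (i + 1) < svalHat n π i

/-- `#P̂(S,n)`: permutations of `{1,…,n}` with `π_0 = 0` prepended and peak set exactly `S`. -/
def PPhat (n : ℕ) (S : Finset ℕ) : ℕ :=
  (Finset.univ.filter fun π : Equiv.Perm (Fin n) => sPeakSetHat n π = S).card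

/-!
With `π_0 = 0`, a permutation has peak set exactly `{k}` iff it rises up to position `k`, falls
to a valley at some position `j > k`, and rises again up to position `n`. It is then the
concatenation of an increasing, a decreasing and an increasing block, hence determined by the sets
of values in the three blocks. If the peak value is `M + 1`, the first block consists of `M + 1`
and any `k - 1` smaller values, and all values above the peak lie in the last block. Of the
`M + 1 - k` remaining values below the peak, the least one is the valley, and each of the other
`M - k` can go to either of the last two blocks. This gives `C(M, k - 1) * 2 ^ (M - k)`
permutations for each `M = k, …, n - 1`; put `M = n - (m - i)`.
-/

namespace SinglePeak

section Sequences

variable {α : Type*} [LinearOrder α] {v : ℕ → α} {k j n : ℕ}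

def IsPeak (v : ℕ → α) (t : ℕ) : Prop := v (t - 1) < v t ∧ v (t + 1) < v t

def UpDownUp (v : ℕ → α) (k j n : ℕ) : Prop :=
  (∀ t < k, v t < v (t + 1)) ∧ (∀ t, k ≤ t → t < j → v (t + 1) < v t) ∧
    ∀ t, j ≤ t → t < n → v t < v (t + 1)

theorem UpDownUp.isPeak_iff (h : UpDownUp v k j n) (hk : 1 ≤ k) (hkj : k < j) {t : ℕ}
    (ht : 1 ≤ t) (htn : t < n) : IsPeak v t ↔ t = k := by
  obtain ⟨hup, hdown, hup'⟩ := h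
  refine ⟨fun ⟨hl, hr⟩ => ?_, ?_⟩
  · by_contra hne
    rcases lt_or_gt_of_ne hne with htk | htk
    · exact (hup t htk).not_gt hr
    · by_cases htj : t < j
      · have hfall := hdown (t - 1) (by omega) (by omega)
        rw [Nat.sub_add_cancel ht] at hfall
        exact hfall.not_gt hl
      · exact (hup' t (by omega) htn).not_gt hr
  · rintro rfl
    have hrise := hup (t - 1) (by omega)
    rw [Nat.sub_add_cancel hk] at hrise
    exact ⟨hrise, hdown t le_rfl hkj⟩

/-- The valley is the first position after the peak that is followed by an ascent; an ascent
into a position that is not a peak goes on, so the sequence rises after it. -/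
theorem exists_upDownUp_of_isPeak_iff (hv : ∀ t < n, v t ≠ v (t + 1)) (h01 : v 0 < v 1)
    (hk : 1 ≤ k) (hkn : k < n) (hpeak : ∀ t, 1 ≤ t → t < n → (IsPeak v t ↔ t = k)) :
    ∃ j, k < j ∧ j ≤ n ∧ UpDownUp v k j n := by
  have rise : ∀ t, 1 ≤ t → t < n → t ≠ k → v (t - 1) < v t → v t < v (t + 1) :=
    fun t ht htn htk hlt => lt_of_le_of_ne
      (not_lt.mp fun hgt => htk ((hpeak t ht htn).mp ⟨hlt, hgt⟩)) (hv t htn)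
  have hup : ∀ t < k, v t < v (t + 1) := by
    intro t ht
    induction t with
    | zero => exact h01
    | succ t ih => exact rise (t + 1) (by omega) (by omega) (by omega) (ih (by omega))
  classical
  have hex : ∃ j, k < j ∧ (j = n ∨ v j < v (j + 1)) := ⟨n, hkn, Or.inl rfl⟩
  obtain ⟨hkj, hj⟩ := Nat.find_spec hex
  have hjn : Nat.find hex ≤ n := Nat.find_min' hex ⟨hkn, Or.inl rfl⟩
  refine ⟨Nat.find hex, hkj, hjn, hup, fun t hkt htj => ?_, fun t hjt htn => ?_⟩
  · obtain rfl | hkt := hkt.eq_or_lt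
    · exact ((hpeak k hk hkn).mpr rfl).2
    · have hnot := not_and_or.mp (Nat.find_min hex htj)
      have htn : t < n := by omega
      exact lt_of_le_of_ne (not_lt.mp fun h => hnot.elim (· hkt) (· (Or.inr h)))
        (hv t htn).symm
  · induction t, hjt using Nat.le_induction with
    | base => exact hj.resolve_left htn.ne
    | succ t hjt ih => exact rise (t + 1) (by omega) htn (by omega) (ih (by omega))

theorem UpDownUp.strictMonoOn_Icc_left (h : UpDownUp v k j n) : StrictMonoOn v (Set.Icc 0 k) :=
  strictMonoOn_of_lt_add_one Set.ordConnected_Icc fun t _ _ ht => h.1 t ht.2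

theorem UpDownUp.strictAntiOn_Icc (h : UpDownUp v k j n) : StrictAntiOn v (Set.Icc k j) :=
  strictAntiOn_of_add_one_lt Set.ordConnected_Icc fun t _ ht ht' => h.2.1 t ht.1 ht'.2

theorem UpDownUp.strictMonoOn_Icc_right (h : UpDownUp v k j n) : StrictMonoOn v (Set.Icc j n) :=
  strictMonoOn_of_lt_add_one Set.ordConnected_Icc fun t _ ht ht' => h.2.2 t ht.1 ht'.2

theorem UpDownUp.lt_peak (h : UpDownUp v k j n) {p : ℕ} (hpj : p ≤ j) (hpk : p ≠ k) :
    v p < v k := by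
  rcases lt_or_gt_of_ne hpk with hp | hp
  · exact h.strictMonoOn_Icc_left ⟨p.zero_le, hp.le⟩ ⟨k.zero_le, le_rfl⟩ hp
  · exact h.strictAntiOn_Icc ⟨le_rfl, (hp.le.trans hpj)⟩ ⟨hp.le, hpj⟩ hp

theorem UpDownUp.valley_le (h : UpDownUp v k j n) (hkj : k ≤ j) {p : ℕ} (hkp : k ≤ p)
    (hpn : p ≤ n) : v j ≤ v p := by
  rcases le_total p j with hp | hp
  · exact h.strictAntiOn_Icc.antitoneOn ⟨hkp, hp⟩ ⟨hkj, le_rfl⟩ hp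
  · exact h.strictMonoOn_Icc_right.monotoneOn ⟨le_rfl, hp.trans hpn⟩ ⟨hp, hpn⟩ hp

end Sequences

section Words

variable {n : ℕ}

/-- `word π p = π_{p+1} - 1`: positions and values are shifted to start at `0`, and the word is
`0` out of range. -/
def word (π : Equiv.Perm (Fin n)) (p : ℕ) : ℕ := if h : p < n then π ⟨p, h⟩ else 0

theorem word_of_lt (π : Equiv.Perm (Fin n)) {p : ℕ} (hp : p < n) : word π p = π ⟨p, hp⟩ :=
  dif_pos hp

theorem word_lt (π : Equiv.Perm (Fin n)) {p : ℕ} (hp : p < n) : word π p < n := by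
  simp [word_of_lt π hp]

theorem word_injOn (π : Equiv.Perm (Fin n)) : Set.InjOn (word π) (Set.Iio n) := by
  intro p hp q hq h
  rw [word_of_lt π hp, word_of_lt π hq] at h
  exact congrArg Fin.val (π.injective (Fin.ext h))

theorem image_word_range (π : Equiv.Perm (Fin n)) : (range n).image (word π) = range n := by
  refine eq_of_subset_of_card_le (fun x hx => ?_) ?_
  · obtain ⟨p, hp, rfl⟩ := mem_image.mp hx
    exact mem_range.mpr (word_lt π (mem_range.mp hp))
  · rw [card_image_of_injOn fun p hp q hq => word_injOn π (mem_range.mp hp) (mem_range.mp hq)]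

theorem word_injective : Function.Injective (word (n := n)) := by
  intro σ π h
  ext x
  simpa [word_of_lt _ x.isLt] using congrFun h x

theorem svalHat_zero (π : Equiv.Perm (Fin n)) : svalHat n π 0 = 0 := rfl

theorem svalHat_succ (π : Equiv.Perm (Fin n)) {t : ℕ} (ht : t < n) :
    svalHat n π (t + 1) = word π t + 1 := by
  simp [svalHat, sval, word_of_lt π ht, ht]

theorem upDownUp_svalHat_iff (π : Equiv.Perm (Fin n)) {k j : ℕ} (hk : 1 ≤ k) (hkj : k ≤ j)
    (hjn : j ≤ n) :
    UpDownUp (svalHat n π) k j n ↔ UpDownUp (word π) (k - 1) (j - 1) (n - 1) := by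
  have key : ∀ s t, s < n → t < n →
      (svalHat n π (s + 1) < svalHat n π (t + 1) ↔ word π s < word π t) := by
    intro s t hs ht
    rw [svalHat_succ π hs, svalHat_succ π ht]
    simp
  constructor
  · rintro ⟨h₁, h₂, h₃⟩
    exact ⟨fun t ht => (key _ _ (by omega) (by omega)).mp (h₁ (t + 1) (by omega)),
      fun t ht ht' => (key _ _ (by omega) (by omega)).mp (h₂ (t + 1) (by omega) (by omega)),
      fun t ht ht' => (key _ _ (by omega) (by omega)).mp (h₃ (t + 1) (by omega) (by omega))⟩
  · rintro ⟨h₁, h₂, h₃⟩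
    refine ⟨fun t ht => ?_, fun t ht ht' => ?_, fun t ht ht' => ?_⟩
    · cases t with
      | zero => rw [svalHat_zero, svalHat_succ π (by omega)]; positivity
      | succ t => exact (key _ _ (by omega) (by omega)).mpr (h₁ t (by omega))
    all_goals obtain ⟨t, rfl⟩ : ∃ s, t = s + 1 := ⟨t - 1, by omega⟩
    · exact (key _ _ (by omega) (by omega)).mpr (h₂ t (by omega) (by omega))
    · exact (key _ _ (by omega) (by omega)).mpr (h₃ t (by omega) (by omega))

theorem sPeakSetHat_eq_singleton_iff (π : Equiv.Perm (Fin n)) {k : ℕ} (hk : 1 ≤ k)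
    (hkn : k < n) : sPeakSetHat n π = {k} ↔
      ∀ t, 1 ≤ t → t < n → (IsPeak (svalHat n π) t ↔ t = k) := by
  simp only [Finset.ext_iff, sPeakSetHat, mem_filter, mem_Icc, mem_singleton, IsPeak]
  constructor
  · intro h t ht htn
    rw [← h t]
    exact ⟨fun hp => ⟨⟨ht, by omega⟩, hp⟩, And.right⟩
  · intro h t
    constructor
    · rintro ⟨⟨ht, htn⟩, hp⟩
      exact (h t ht (by omega)).mp hp
    · rintro rfl
      exact ⟨⟨hk, by omega⟩, (h t hk hkn).mpr rfl⟩

theorem sPeakSetHat_eq_singleton_iff_upDownUp (π : Equiv.Perm (Fin n)) {k : ℕ} (hk : 1 ≤ k)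
    (hkn : k < n) : sPeakSetHat n π = {k} ↔
      ∃ j, k < j ∧ j ≤ n ∧ UpDownUp (word π) (k - 1) (j - 1) (n - 1) := by
  rw [sPeakSetHat_eq_singleton_iff π hk hkn]
  constructor
  · intro hpeak
    have hv : ∀ t < n, svalHat n π t ≠ svalHat n π (t + 1) := by
      rintro (_ | t) ht
      · rw [svalHat_zero, svalHat_succ π ht]; positivity
      · rw [svalHat_succ π (by omega), svalHat_succ π ht, Ne, add_left_inj, Nat.cast_inj]
        exact fun h => by
          simpa using word_injOn π (Set.mem_Iio.mpr (by omega)) (Set.mem_Iio.mpr ht) h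
    have h01 : svalHat n π 0 < svalHat n π 1 := by
      rw [svalHat_zero, svalHat_succ π (by omega)]; positivity
    obtain ⟨j, hkj, hjn, h⟩ := exists_upDownUp_of_isPeak_iff hv h01 hk hkn hpeak
    exact ⟨j, hkj, hjn, (upDownUp_svalHat_iff π hk hkj.le hjn).mp h⟩
  · rintro ⟨j, hkj, hjn, h⟩ t ht htn
    exact ((upDownUp_svalHat_iff π hk hkj.le hjn).mpr h).isPeak_iff hk hkj ht htn

end Words

section Lists

theorem toFinset_map_range' (u : ℕ → ℕ) (a b : ℕ) :
    ((List.range' a (b - a)).map u).toFinset = (Ico a b).image u := by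
  ext x
  simp only [List.mem_toFinset, List.mem_map, List.mem_range'_1, mem_image, mem_Ico]
  exact exists_congr fun y => and_congr_left fun _ => by omega

theorem pairwise_map_range' {u : ℕ → ℕ} {a b : ℕ} {r : ℕ → ℕ → Prop}
    (h : ∀ x ∈ Set.Ico a b, ∀ y ∈ Set.Ico a b, x < y → r (u x) (u y)) :
    ((List.range' a (b - a)).map u).Pairwise r :=
  List.pairwise_map.mpr <| List.Pairwise.imp_of_mem (fun hx hy hxy =>
    h _ (by simp [List.mem_range'_1] at hx; exact ⟨hx.1, by omega⟩) _
      (by simp [List.mem_range'_1] at hy; exact ⟨hy.1, by omega⟩) hxy)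
    List.pairwise_lt_range'

theorem sort_image_Ico_of_strictMonoOn {u : ℕ → ℕ} {a b : ℕ}
    (h : StrictMonoOn u (Set.Ico a b)) :
    ((Ico a b).image u).sort = (List.range' a (b - a)).map u := by
  have hpw := pairwise_map_range' (r := (· < ·)) fun x hx y hy => h hx hy
  rw [← toFinset_map_range']
  exact (List.toFinset_sort _ (hpw.imp ne_of_lt)).mpr (hpw.imp le_of_lt)

theorem sort_ge_image_Ico_of_strictAntiOn {u : ℕ → ℕ} {a b : ℕ}
    (h : StrictAntiOn u (Set.Ico a b)) :
    ((Ico a b).image u).sort (· ≥ ·) = (List.range' a (b - a)).map u := by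
  have hpw := pairwise_map_range' (r := (· > ·)) fun x hx y hy => h hx hy
  rw [← toFinset_map_range']
  exact (List.toFinset_sort _ (hpw.imp ne_of_gt)).mpr (hpw.imp le_of_lt)

variable (s : Finset ℕ) {p : ℕ}

theorem getD_sort_lt_getD_succ (hp : p + 1 < #s) : s.sort.getD p 0 < s.sort.getD (p + 1) 0 := by
  rw [List.getD_eq_getElem _ _ (by simp; omega), List.getD_eq_getElem _ _ (by simp; omega)]
  exact (sortedLT_sort s).getElem_lt_getElem_iff.mpr p.lt_succ_self

theorem getD_sort_ge_succ_lt_getD (hp : p + 1 < #s) :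
    (s.sort (· ≥ ·)).getD (p + 1) 0 < (s.sort (· ≥ ·)).getD p 0 := by
  rw [List.getD_eq_getElem _ _ (by simp; omega), List.getD_eq_getElem _ _ (by simp; omega)]
  exact (sortedGT_sort s).getElem_lt_getElem_iff.mpr p.lt_succ_self

theorem getD_sort_mem (r : ℕ → ℕ → Prop) [DecidableRel r] [IsTrans ℕ r] [Std.Antisymm r]
    [Std.Total r] (hp : p < #s) : (s.sort r).getD p 0 ∈ s := by
  rw [List.getD_eq_getElem _ _ (by simpa using hp)]
  exact (mem_sort r).mp (List.getElem_mem _)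

variable {s} {a : ℕ}

theorem getD_sort_card_sub_one (ha : a ∈ s) (hmax : ∀ x ∈ s, x ≤ a) :
    s.sort.getD (#s - 1) 0 = a := by
  have hs : 0 < #s := card_pos.mpr ⟨a, ha⟩
  refine le_antisymm (hmax _ (getD_sort_mem s _ (by omega))) ?_
  obtain ⟨t, ht, rfl⟩ := List.getElem_of_mem ((mem_sort (· ≤ ·)).mpr ha)
  have ht' : t < #s := by simpa using ht
  rw [List.getD_eq_getElem _ _ (by rw [length_sort]; omega)]
  exact (sortedLT_sort s).getElem_le_getElem_iff.mpr (by omega)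

theorem getD_sort_ge_card_sub_one (ha : a ∈ s) (hmin : ∀ x ∈ s, a ≤ x) :
    (s.sort (· ≥ ·)).getD (#s - 1) 0 = a := by
  have hs : 0 < #s := card_pos.mpr ⟨a, ha⟩
  refine le_antisymm ?_ (hmin _ (getD_sort_mem s _ (by omega)))
  obtain ⟨t, ht, rfl⟩ := List.getElem_of_mem ((mem_sort (· ≥ ·)).mpr ha)
  have ht' : t < #s := by simpa using ht
  rw [List.getD_eq_getElem _ _ (by rw [length_sort]; omega)]
  exact (sortedGT_sort s).getElem_le_getElem_iff.mpr (by omega)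

end Lists

section BlockList

def blockList (A D T : Finset ℕ) : List ℕ := A.sort ++ (D.sort (· ≥ ·) ++ T.sort)

variable {A D T : Finset ℕ} {p : ℕ}

theorem length_blockList : (blockList A D T).length = #A + #D + #T := by
  simp [blockList, add_assoc]

theorem mem_blockList {x : ℕ} : x ∈ blockList A D T ↔ x ∈ A ∨ x ∈ D ∨ x ∈ T := by
  simp [blockList]

theorem nodup_blockList (hAD : Disjoint A D) (hAT : Disjoint A T) (hDT : Disjoint D T) :
    (blockList A D T).Nodup := by
  simp only [blockList, List.nodup_append, sort_nodup, mem_sort, List.mem_append, true_and]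
  refine ⟨fun x hx y hy hxy => disjoint_left.mp hDT hx (hxy ▸ hy), fun x hx y hy hxy => ?_⟩
  subst hxy
  exact hy.elim (disjoint_left.mp hAD hx) (disjoint_left.mp hAT hx)

theorem map_range_eq_blockList {u : ℕ → ℕ} {k j n : ℕ} (hkj : k ≤ j) (hjn : j ≤ n)
    (hA : StrictMonoOn u (Set.Ico 0 k)) (hD : StrictAntiOn u (Set.Ico k j))
    (hT : StrictMonoOn u (Set.Ico j n)) : (List.range n).map u =
      blockList ((Ico 0 k).image u) ((Ico k j).image u) ((Ico j n).image u) := by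
  have hsplit : ∀ a b c : ℕ, a ≤ b → b ≤ c →
      List.range' a (b - a) ++ List.range' b (c - b) = List.range' a (c - a) := by
    intro a b c hab hbc
    have h := List.range'_append (s := a) (m := b - a) (n := c - b) (step := 1)
    rwa [show a + 1 * (b - a) = b by omega, show b - a + (c - b) = c - a by omega] at h
  rw [blockList, sort_image_Ico_of_strictMonoOn hA, sort_ge_image_Ico_of_strictAntiOn hD,
    sort_image_Ico_of_strictMonoOn hT, ← List.map_append, ← List.map_append,
    hsplit k j n hkj hjn, hsplit 0 k n k.zero_le (hkj.trans hjn), List.range_eq_range',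
    Nat.sub_zero]

theorem getD_blockList_of_lt (hp : p < #A) : (blockList A D T).getD p 0 = A.sort.getD p 0 :=
  List.getD_append _ _ _ _ (by simpa using hp)

theorem getD_blockList_of_le_of_lt (h₁ : #A ≤ p) (h₂ : p < #A + #D) :
    (blockList A D T).getD p 0 = (D.sort (· ≥ ·)).getD (p - #A) 0 := by
  rw [blockList, List.getD_append_right _ _ _ _ (by simpa using h₁),
    List.getD_append _ _ _ _ (by simp; omega), length_sort]

theorem getD_blockList_of_le (h : #A + #D ≤ p) :
    (blockList A D T).getD p 0 = T.sort.getD (p - (#A + #D)) 0 := by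
  rw [blockList, List.getD_append_right _ _ _ _ (by simp; omega),
    List.getD_append_right _ _ _ _ (by simp; omega)]
  simp [Nat.sub_sub]

variable {M v : ℕ}

theorem getD_blockList_peak (hM : M ∈ A) (hAM : ∀ x ∈ A, x ≤ M) :
    (blockList A D T).getD (#A - 1) 0 = M := by
  rw [getD_blockList_of_lt (by have := card_pos.mpr ⟨M, hM⟩; omega),
    getD_sort_card_sub_one hM hAM]

theorem getD_blockList_valley (hv : v ∈ D) (hDv : ∀ x ∈ D, v ≤ x) :
    (blockList A D T).getD (#A + #D - 1) 0 = v := by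
  have hD : 0 < #D := card_pos.mpr ⟨v, hv⟩
  rw [getD_blockList_of_le_of_lt (by omega) (by omega),
    show #A + #D - 1 - #A = #D - 1 by omega, getD_sort_ge_card_sub_one hv hDv]

theorem upDownUp_getD_blockList (hM : M ∈ A) (hAM : ∀ x ∈ A, x ≤ M)
    (hDM : ∀ x ∈ D, x < M) (hv : v ∈ D) (hDv : ∀ x ∈ D, v ≤ x)
    (hTv : ∀ x ∈ T, v < x) :
    UpDownUp (fun p => (blockList A D T).getD p 0) (#A - 1) (#A + #D - 1)
      (#A + #D + #T - 1) := by
  have hA : 0 < #A := card_pos.mpr ⟨M, hM⟩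
  have hD : 0 < #D := card_pos.mpr ⟨v, hv⟩
  refine ⟨fun t ht => ?_, fun t ht ht' => ?_, fun t ht ht' => ?_⟩ <;> dsimp only
  · rw [getD_blockList_of_lt (by omega), getD_blockList_of_lt (by omega)]
    exact getD_sort_lt_getD_succ A (by omega)
  · obtain rfl | ht := ht.eq_or_lt
    · rw [getD_blockList_peak hM hAM, Nat.sub_add_cancel hA,
        getD_blockList_of_le_of_lt le_rfl (by omega)]
      exact hDM _ (getD_sort_mem D _ (by omega))
    · rw [getD_blockList_of_le_of_lt (by omega) (by omega),
        getD_blockList_of_le_of_lt (by omega) (by omega), show t + 1 - #A = t - #A + 1 by omega]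
      exact getD_sort_ge_succ_lt_getD D (by omega)
  · obtain rfl | ht := ht.eq_or_lt
    · rw [getD_blockList_valley hv hDv, Nat.sub_add_cancel (by omega : 1 ≤ #A + #D),
        getD_blockList_of_le le_rfl]
      exact hTv _ (getD_sort_mem T _ (by omega))
    · rw [getD_blockList_of_le (by omega), getD_blockList_of_le (by omega),
        show t + 1 - (#A + #D) = t - (#A + #D) + 1 by omega]
      exact getD_sort_lt_getD_succ T (by omega)

theorem blockList_inj_right {D' T' : Finset ℕ} (h : blockList A D T = blockList A D' T')
    (hnd : (blockList A D T).Nodup) (hv : v ∈ D) (hDv : ∀ x ∈ D, v ≤ x) (hv' : v ∈ D')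
    (hD'v : ∀ x ∈ D', v ≤ x) : D = D' ∧ T = T' := by
  have hD : 0 < #D := card_pos.mpr ⟨v, hv⟩
  have hD' : 0 < #D' := card_pos.mpr ⟨v, hv'⟩
  have hlen := length_blockList (A := A) (D := D) (T := T)
  have hlen' := length_blockList (A := A) (D := D') (T := T')
  have hidx : #A + #D - 1 = #A + #D' - 1 := by
    have hval := (getD_blockList_valley (A := A) (T := T) hv hDv).trans
      (h ▸ getD_blockList_valley (T := T') hv' hD'v).symm
    rw [List.getD_eq_getElem _ _ (by omega),
      List.getD_eq_getElem _ _ (by rw [h]; omega)] at hval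
    exact (hnd.getElem_inj_iff).mp hval
  obtain ⟨-, hrest⟩ := List.append_inj h rfl
  obtain ⟨hDs, hTs⟩ := List.append_inj hrest (by simp; omega)
  exact ⟨by simpa using congrArg List.toFinset hDs, by simpa using congrArg List.toFinset hTs⟩

end BlockList

section PermOfList

variable {n : ℕ}

theorem exists_word_eq_getD {L : List ℕ} (hnd : L.Nodup) (hlen : L.length = n)
    (hlt : ∀ x ∈ L, x < n) : ∃ π : Equiv.Perm (Fin n), word π = fun p => L.getD p 0 := by
  let f : Fin n → Fin n := fun p =>
    ⟨L[(p : ℕ)]'(hlen ▸ p.isLt), hlt _ (List.getElem_mem _)⟩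
  have hf : Function.Injective f := fun p q h =>
    Fin.ext ((hnd.getElem_inj_iff).mp (congrArg Fin.val h))
  refine ⟨Equiv.ofBijective f (Finite.injective_iff_bijective.mp hf), funext fun p => ?_⟩
  by_cases hp : p < n
  · rw [word_of_lt _ hp, List.getD_eq_getElem _ _ (hlen ▸ hp)]
    rfl
  · rw [word, dif_neg hp, List.getD_eq_default _ _ (by omega)]

noncomputable def permOfList (n : ℕ) (L : List ℕ) : Equiv.Perm (Fin n) :=
  if h : L.Nodup ∧ L.length = n ∧ ∀ x ∈ L, x < n then
    (exists_word_eq_getD h.1 h.2.1 h.2.2).choose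
  else 1

theorem word_permOfList {L : List ℕ} (hnd : L.Nodup) (hlen : L.length = n)
    (hlt : ∀ x ∈ L, x < n) : word (permOfList n L) = fun p => L.getD p 0 := by
  rw [permOfList, dif_pos ⟨hnd, hlen, hlt⟩]
  exact (exists_word_eq_getD hnd hlen hlt).choose_spec

theorem word_eq_getD_map_range (π : Equiv.Perm (Fin n)) :
    word π = fun p => ((List.range n).map (word π)).getD p 0 := by
  funext p
  by_cases hp : p < n
  · rw [List.getD_eq_getElem _ _ (by simpa), List.getElem_map, List.getElem_range]
  · rw [word, dif_neg hp, List.getD_eq_default _ _ (by simp; omega)]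

end PermOfList

section PeakData

variable {n k M : ℕ} {H S : Finset ℕ}

noncomputable def valley (M : ℕ) (H : Finset ℕ) : ℕ := sInf (↑(range M \ H) : Set ℕ)

theorem valley_mem (hH : H ⊆ range M) (hcard : #H < M) :
    valley M H ∈ range M \ H :=
  Nat.sInf_mem (by rw [coe_nonempty, ← card_pos, card_sdiff_of_subset hH, card_range]; omega)

theorem valley_le {x : ℕ} (hx : x ∈ range M \ H) : valley M H ≤ x :=
  Nat.sInf_le hx

/-- `⟨M, H, S⟩` stands for the permutation whose word has the peak value `M`, the other values
`H` before the peak, and the values `S` below `M` after the valley; the valley value is then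
`valley M H`. -/
abbrev PeakDatum : Type := Σ _ : ℕ, Σ _ : Finset ℕ, Finset ℕ

noncomputable def peakData (n k : ℕ) : Finset PeakDatum :=
  (Ico k n).sigma fun M => ((range M).powersetCard (k - 1)).sigma fun H =>
    ((range M \ H).erase (valley M H)).powerset

theorem mem_peakData : (⟨M, H, S⟩ : PeakDatum) ∈ peakData n k ↔
    (k ≤ M ∧ M < n) ∧ (H ⊆ range M ∧ #H = k - 1) ∧
      S ⊆ (range M \ H).erase (valley M H) := by
  simp [peakData]

theorem card_peakData (hk : 1 ≤ k) :
    #(peakData n k) = ∑ M ∈ Ico k n, M.choose (k - 1) * 2 ^ (M - k) := by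
  rw [peakData, card_sigma]
  refine sum_congr rfl fun M hM => ?_
  have hkM := (mem_Ico.mp hM).1
  rw [card_sigma, sum_const_nat fun H hH => ?_, card_powersetCard, card_range]
  obtain ⟨hH, hcard⟩ := mem_powersetCard.mp hH
  rw [card_powerset, card_erase_of_mem (valley_mem hH (by omega)), card_sdiff_of_subset hH,
    card_range, hcard]
  congr 1
  omega

def initialRun (M : ℕ) (H : Finset ℕ) : Finset ℕ := insert M H

def finalRun (n M : ℕ) (S : Finset ℕ) : Finset ℕ := S ∪ Ioo M n

def descentRun (n M : ℕ) (H S : Finset ℕ) : Finset ℕ :=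
  range n \ (initialRun M H ∪ finalRun n M S)

noncomputable def decode (n : ℕ) (d : PeakDatum) : Equiv.Perm (Fin n) :=
  permOfList n <|
    blockList (initialRun d.1 d.2.1) (descentRun n d.1 d.2.1 d.2.2) (finalRun n d.1 d.2.2)

theorem lt_of_mem_descentRun {x : ℕ} (hx : x ∈ descentRun n M H S) : x < M := by
  simp only [descentRun, initialRun, finalRun, mem_sdiff, mem_range, mem_union, mem_insert,
    mem_Ioo, not_or] at hx
  omega

theorem valley_le_of_mem_descentRun {x : ℕ} (hx : x ∈ descentRun n M H S) :
    valley M H ≤ x := by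
  refine valley_le (mem_sdiff.mpr ⟨mem_range.mpr (lt_of_mem_descentRun hx), fun h => ?_⟩)
  simp only [descentRun, initialRun, mem_sdiff, mem_union, mem_insert] at hx
  exact hx.2 (Or.inl (Or.inr h))

theorem le_of_mem_initialRun (hH : H ⊆ range M) {x : ℕ} (hx : x ∈ initialRun M H) :
    x ≤ M := by
  rcases mem_insert.mp hx with rfl | hx
  exacts [le_rfl, (mem_range.mp (hH hx)).le]

theorem valley_mem_descentRun (hk : 1 ≤ k) (hd : (⟨M, H, S⟩ : PeakDatum) ∈ peakData n k) :
    valley M H ∈ descentRun n M H S := by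
  obtain ⟨⟨hkM, hMn⟩, ⟨hH, hcard⟩, hS⟩ := mem_peakData.mp hd
  have hv := valley_mem hH (by omega)
  simp only [mem_sdiff, mem_range] at hv
  simp only [descentRun, initialRun, finalRun, mem_sdiff, mem_range, mem_union, mem_insert,
    mem_Ioo, not_or]
  exact ⟨by omega, ⟨by omega, hv.2⟩, fun h => by simpa using hS h, by omega⟩

theorem valley_lt_of_mem_finalRun (hk : 1 ≤ k) (hd : (⟨M, H, S⟩ : PeakDatum) ∈ peakData n k)
    {x : ℕ} (hx : x ∈ finalRun n M S) : valley M H < x := by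
  obtain ⟨⟨hkM, hMn⟩, ⟨hH, hcard⟩, hS⟩ := mem_peakData.mp hd
  rcases mem_union.mp hx with hx | hx
  · obtain ⟨hne, hx⟩ := mem_erase.mp (hS hx)
    exact lt_of_le_of_ne (valley_le hx) (Ne.symm hne)
  · exact (mem_range.mp (mem_sdiff.mp (valley_mem hH (by omega))).1).trans (mem_Ioo.mp hx).1

theorem filter_finalRun (hd : (⟨M, H, S⟩ : PeakDatum) ∈ peakData n k) :
    (finalRun n M S).filter (· < M) = S := by
  obtain ⟨-, -, hS⟩ := mem_peakData.mp hd
  ext x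
  simp only [finalRun, mem_filter, mem_union, mem_Ioo]
  have := fun h : x ∈ S => mem_range.mp (mem_sdiff.mp (mem_of_mem_erase (hS h))).1
  constructor
  · rintro ⟨hx | hx, hxM⟩
    exacts [hx, absurd hxM (by omega)]
  · exact fun hx => ⟨Or.inl hx, this hx⟩

theorem disjoint_initialRun_finalRun (hd : (⟨M, H, S⟩ : PeakDatum) ∈ peakData n k) :
    Disjoint (initialRun M H) (finalRun n M S) := by
  obtain ⟨-, ⟨hH, -⟩, hS⟩ := mem_peakData.mp hd
  refine disjoint_left.mpr fun x hxA hxT => ?_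
  rcases mem_union.mp hxT with hx | hx
  · have hx := mem_sdiff.mp (mem_of_mem_erase (hS hx))
    rcases mem_insert.mp hxA with rfl | hxA
    exacts [(mem_range.mp hx.1).false, hx.2 hxA]
  · exact (le_of_mem_initialRun hH hxA).not_gt (mem_Ioo.mp hx).1

theorem initialRun_union_finalRun_subset (hd : (⟨M, H, S⟩ : PeakDatum) ∈ peakData n k) :
    initialRun M H ∪ finalRun n M S ⊆ range n := by
  obtain ⟨⟨-, hMn⟩, ⟨hH, -⟩, hS⟩ := mem_peakData.mp hd
  intro x hx
  simp only [initialRun, finalRun, mem_union, mem_insert, mem_Ioo] at hx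
  have hH' : ∀ {y}, y ∈ H → y < M := fun h => mem_range.mp (hH h)
  have hS' : ∀ {y}, y ∈ S → y < M := fun h =>
    mem_range.mp (mem_sdiff.mp (mem_of_mem_erase (hS h))).1
  rw [mem_range]
  rcases hx with (rfl | hx) | hx | hx
  · exact hMn
  · exact (hH' hx).trans hMn
  · exact (hS' hx).trans hMn
  · exact hx.2

theorem card_initialRun (hk : 1 ≤ k) (hd : (⟨M, H, S⟩ : PeakDatum) ∈ peakData n k) :
    #(initialRun M H) = k := by
  obtain ⟨-, ⟨hH, hcard⟩, -⟩ := mem_peakData.mp hd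
  rw [initialRun, card_insert_of_notMem fun h => (mem_range.mp (hH h)).false, hcard]
  omega

theorem card_runs (hd : (⟨M, H, S⟩ : PeakDatum) ∈ peakData n k) :
    #(initialRun M H) + #(descentRun n M H S) + #(finalRun n M S) = n := by
  rw [descentRun, card_sdiff_of_subset (initialRun_union_finalRun_subset hd),
    card_union_of_disjoint (disjoint_initialRun_finalRun hd), card_range]
  have := card_le_card (initialRun_union_finalRun_subset hd)
  rw [card_union_of_disjoint (disjoint_initialRun_finalRun hd), card_range] at this
  omega

theorem nodup_blockList_runs (hd : (⟨M, H, S⟩ : PeakDatum) ∈ peakData n k) :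
    (blockList (initialRun M H) (descentRun n M H S) (finalRun n M S)).Nodup :=
  nodup_blockList (disjoint_sdiff.mono_left subset_union_left) (disjoint_initialRun_finalRun hd)
    (sdiff_disjoint.mono_right subset_union_right)

theorem word_decode (hd : (⟨M, H, S⟩ : PeakDatum) ∈ peakData n k) :
    word (decode n ⟨M, H, S⟩) =
      fun p => (blockList (initialRun M H) (descentRun n M H S) (finalRun n M S)).getD p 0 := by
  refine word_permOfList (nodup_blockList_runs hd) (length_blockList.trans (card_runs hd))
    fun x hx => ?_
  have hsub := initialRun_union_finalRun_subset hd
  rcases mem_blockList.mp hx with hx | hx | hx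
  · exact mem_range.mp (hsub (mem_union_left _ hx))
  · exact mem_range.mp (mem_sdiff.mp hx).1
  · exact mem_range.mp (hsub (mem_union_right _ hx))

theorem sPeakSetHat_decode (hk : 1 ≤ k) (hd : (⟨M, H, S⟩ : PeakDatum) ∈ peakData n k) :
    sPeakSetHat n (decode n ⟨M, H, S⟩) = {k} := by
  obtain ⟨⟨hkM, hMn⟩, ⟨hH, -⟩, -⟩ := mem_peakData.mp hd
  have hv := valley_mem_descentRun hk hd
  have hD : 0 < #(descentRun n M H S) := card_pos.mpr ⟨_, hv⟩
  have hn := card_runs hd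
  rw [sPeakSetHat_eq_singleton_iff_upDownUp _ hk (by omega)]
  refine ⟨k + #(descentRun n M H S), by omega, by rw [card_initialRun hk hd] at hn; omega, ?_⟩
  have h := upDownUp_getD_blockList (A := initialRun M H) (mem_insert_self M H)
    (fun _ => le_of_mem_initialRun hH) (fun _ => lt_of_mem_descentRun) hv
    (fun _ => valley_le_of_mem_descentRun) (fun _ => valley_lt_of_mem_finalRun hk hd)
  rw [hn, card_initialRun hk hd] at h
  rwa [word_decode hd]

theorem initialRun_inj {M' : ℕ} {H' : Finset ℕ} (hH : H ⊆ range M) (hH' : H' ⊆ range M')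
    (h : initialRun M H = initialRun M' H') : M = M' ∧ H = H' := by
  have hM : M ∈ initialRun M' H' := h ▸ mem_insert_self M H
  have hM' : M' ∈ initialRun M H := h ▸ mem_insert_self M' H'
  have hMM' : M = M' := by
    have := le_of_mem_initialRun hH' hM
    have := le_of_mem_initialRun hH hM'
    omega
  subst hMM'
  refine ⟨rfl, ?_⟩
  rw [← erase_insert fun h => (mem_range.mp (hH h)).false, ← erase_insert (a := M) (s := H')
    fun h => (mem_range.mp (hH' h)).false]
  exact congrArg (·.erase M) h

theorem decode_injOn (hk : 1 ≤ k) : Set.InjOn (decode n) (peakData n k) := by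
  rintro ⟨M₁, H₁, S₁⟩ hd₁ ⟨M₂, H₂, S₂⟩ hd₂ h
  have hw := congrArg word h
  rw [word_decode hd₁, word_decode hd₂] at hw
  have hL := List.ext_getElem ((length_blockList.trans (card_runs hd₁)).trans
    (length_blockList.trans (card_runs hd₂)).symm) fun i h₁ h₂ => by
      have hi := congrFun hw i
      rwa [List.getD_eq_getElem _ _ h₁, List.getD_eq_getElem _ _ h₂] at hi
  obtain ⟨hA, -⟩ :=
    List.append_inj hL (by simp [card_initialRun hk hd₁, card_initialRun hk hd₂])
  obtain ⟨rfl, rfl⟩ := initialRun_inj (mem_peakData.mp hd₁).2.1.1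
    (mem_peakData.mp hd₂).2.1.1 (by simpa using congrArg List.toFinset hA)
  obtain ⟨-, hT⟩ := blockList_inj_right hL (nodup_blockList_runs hd₁)
    (valley_mem_descentRun hk hd₁) (fun _ => valley_le_of_mem_descentRun)
    (valley_mem_descentRun hk hd₂) (fun _ => valley_le_of_mem_descentRun)
  rw [← filter_finalRun hd₁, hT, filter_finalRun hd₂]

end PeakData

section Encode

variable {u : ℕ → ℕ} {k j n : ℕ}

theorem image_Ico_eq_range_sdiff (hinj : Set.InjOn u (Set.Iio n))
    (himage : (range n).image u = range n) {a b : ℕ} (hab : a ≤ b) (hbn : b ≤ n) :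
    (Ico a b).image u = range n \ ((Ico 0 a).image u ∪ (Ico b n).image u) := by
  ext x
  simp only [mem_image, mem_sdiff, mem_union, mem_Ico, not_or, not_exists, not_and]
  constructor
  · rintro ⟨p, ⟨hap, hpb⟩, rfl⟩
    refine ⟨himage ▸ mem_image_of_mem u (mem_range.mpr (by omega)), fun q hq h => ?_,
      fun q hq h => ?_⟩ <;>
    · have := hinj (Set.mem_Iio.mpr (by omega)) (Set.mem_Iio.mpr (by omega)) h
      omega
  · rintro ⟨hx, hlow, hhigh⟩
    obtain ⟨p, hp, rfl⟩ := mem_image.mp (himage.symm ▸ hx)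
    have hp := mem_range.mp hp
    exact ⟨p, ⟨not_lt.mp fun h => hlow p ⟨p.zero_le, h⟩ rfl,
      not_le.mp fun h => hhigh p ⟨h, hp⟩ rfl⟩, rfl⟩

/-- The word `u` of a permutation of `range n` whose peak is at position `k` and whose valley is
at position `j`, counting positions from `1` as in `svalHat`. -/
structure PeakValleyWord (u : ℕ → ℕ) (k j n : ℕ) : Prop where
  one_le : 1 ≤ k
  lt_valley : k < j
  le_length : j ≤ n
  upDownUp : UpDownUp u (k - 1) (j - 1) (n - 1)
  injOn : Set.InjOn u (Set.Iio n)
  image_range : (range n).image u = range n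

def encode (u : ℕ → ℕ) (k j n : ℕ) : PeakDatum :=
  ⟨u (k - 1), (Ico 0 (k - 1)).image u, ((Ico j n).image u).filter (· < u (k - 1))⟩

namespace PeakValleyWord

theorem apply_lt (hu : PeakValleyWord u k j n) {p : ℕ} (hp : p < n) : u p < n :=
  mem_range.mp (hu.image_range ▸ mem_image_of_mem u (mem_range.mpr hp))

theorem exists_eq (hu : PeakValleyWord u k j n) {x : ℕ} (hx : x < n) : ∃ p < n, u p = x := by
  obtain ⟨p, hp, rfl⟩ := mem_image.mp (hu.image_range.symm ▸ mem_range.mpr hx)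
  exact ⟨p, mem_range.mp hp, rfl⟩

theorem eq_of_apply_eq (hu : PeakValleyWord u k j n) {p q : ℕ} (hp : p < n) (hq : q < n)
    (h : u p = u q) : p = q :=
  hu.injOn (Set.mem_Iio.mpr hp) (Set.mem_Iio.mpr hq) h

theorem lt_peak (hu : PeakValleyWord u k j n) {p : ℕ} (hpj : p < j) (hpk : p ≠ k - 1) :
    u p < u (k - 1) :=
  hu.upDownUp.lt_peak (by omega) hpk

theorem initialRun_encode (hu : PeakValleyWord u k j n) :
    initialRun (encode u k j n).1 (encode u k j n).2.1 = (Ico 0 k).image u := by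
  have hk := hu.one_le
  simp only [encode, initialRun]
  rw [← image_insert, ← Nat.Ico_succ_right_eq_insert_Ico (Nat.zero_le _),
    Nat.succ_eq_add_one, Nat.sub_add_cancel hk]

theorem finalRun_encode (hu : PeakValleyWord u k j n) :
    finalRun n (encode u k j n).1 (encode u k j n).2.2 = (Ico j n).image u := by
  have := hu.lt_valley
  ext x
  simp only [encode, finalRun, mem_union, mem_filter, mem_Ioo]
  constructor
  · rintro (⟨hx, -⟩ | ⟨hMx, hxn⟩)
    · exact hx
    obtain ⟨p, hp, rfl⟩ := hu.exists_eq hxn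
    refine mem_image.mpr ⟨p, mem_Ico.mpr ⟨not_lt.mp fun hpj => ?_, hp⟩, rfl⟩
    obtain rfl | hpk := eq_or_ne p (k - 1)
    exacts [lt_irrefl _ hMx, (hu.lt_peak hpj hpk).not_gt hMx]
  · intro hx
    obtain ⟨p, hp, rfl⟩ := mem_image.mp hx
    obtain ⟨hjp, hpn⟩ := mem_Ico.mp hp
    rcases lt_trichotomy (u p) (u (k - 1)) with h | h | h
    · exact Or.inl ⟨hx, h⟩
    · have := hu.eq_of_apply_eq hpn (by omega) h
      omega
    · exact Or.inr ⟨h, hu.apply_lt hpn⟩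

theorem descentRun_encode (hu : PeakValleyWord u k j n) :
    descentRun n (encode u k j n).1 (encode u k j n).2.1 (encode u k j n).2.2 =
      (Ico k j).image u := by
  rw [descentRun, hu.initialRun_encode, hu.finalRun_encode,
    image_Ico_eq_range_sdiff hu.injOn hu.image_range hu.lt_valley.le hu.le_length]

theorem valley_encode (hu : PeakValleyWord u k j n) :
    valley (encode u k j n).1 (encode u k j n).2.1 = u (j - 1) := by
  have := hu.one_le
  have := hu.lt_valley
  have := hu.le_length
  have hmem : u (j - 1) ∈ range (u (k - 1)) \ (Ico 0 (k - 1)).image u := by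
    refine mem_sdiff.mpr ⟨mem_range.mpr (hu.lt_peak (by omega) (by omega)), fun h => ?_⟩
    obtain ⟨q, hq, hqj⟩ := mem_image.mp h
    have := hu.eq_of_apply_eq (by simp at hq; omega) (by omega) hqj
    simp at hq
    omega
  refine le_antisymm (valley_le hmem) (le_csInf ⟨_, hmem⟩ fun y hy => ?_)
  obtain ⟨hyM, hyH⟩ := mem_sdiff.mp hy
  have hyM := mem_range.mp hyM
  obtain ⟨q, hq, rfl⟩ := hu.exists_eq (hyM.trans (hu.apply_lt (by omega)))
  have hkq : k - 1 ≤ q := by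
    by_contra hqk
    exact hyH (mem_image_of_mem u (mem_Ico.mpr ⟨q.zero_le, by omega⟩))
  have hqk : q ≠ k - 1 := by rintro rfl; exact lt_irrefl _ hyM
  exact hu.upDownUp.valley_le (by omega) (by omega) (by omega)

theorem encode_mem_peakData (hu : PeakValleyWord u k j n) : encode u k j n ∈ peakData n k := by
  have := hu.lt_valley
  have := hu.le_length
  have hk := hu.one_le
  rw [encode, mem_peakData]
  refine ⟨⟨?_, hu.apply_lt (by omega)⟩, ⟨fun x hx => ?_, ?_⟩, fun x hx => ?_⟩
  · have hsub : (range (k + 1)).image u ⊆ range (u (k - 1) + 1) := fun x hx => by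
      obtain ⟨p, hp, rfl⟩ := mem_image.mp hx
      have hp := mem_range.mp hp
      obtain rfl | hpk := eq_or_ne p (k - 1)
      exacts [mem_range.mpr (by omega),
        mem_range.mpr ((hu.lt_peak (by omega) hpk).trans (by omega))]
    have hcard := card_le_card hsub
    rw [card_image_of_injOn (hu.injOn.mono fun p hp => by simp at hp ⊢; omega), card_range,
      card_range] at hcard
    omega
  · obtain ⟨p, hp, rfl⟩ := mem_image.mp hx
    exact mem_range.mpr (hu.lt_peak (by simp at hp; omega) (by simp at hp; omega))
  · rw [card_image_of_injOn (hu.injOn.mono fun p hp => by simp at hp ⊢; omega), Nat.card_Ico,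
      Nat.sub_zero]
  · obtain ⟨hxT, hxM⟩ := mem_filter.mp hx
    obtain ⟨p, hp, rfl⟩ := mem_image.mp hxT
    obtain ⟨hjp, hpn⟩ := mem_Ico.mp hp
    refine mem_erase.mpr ⟨fun h => ?_, mem_sdiff.mpr ⟨mem_range.mpr hxM, fun hH => ?_⟩⟩
    · have := hu.eq_of_apply_eq hpn (by omega) (h.trans hu.valley_encode)
      omega
    · obtain ⟨q, hq, hqp⟩ := mem_image.mp hH
      have := hu.eq_of_apply_eq (by simp at hq; omega) hpn hqp
      simp at hq
      omega

theorem map_range_eq_blockList_encode (hu : PeakValleyWord u k j n) :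
    (List.range n).map u = blockList (initialRun (encode u k j n).1 (encode u k j n).2.1)
      (descentRun n (encode u k j n).1 (encode u k j n).2.1 (encode u k j n).2.2)
      (finalRun n (encode u k j n).1 (encode u k j n).2.2) := by
  have := hu.lt_valley
  have := hu.le_length
  rw [hu.initialRun_encode, hu.descentRun_encode, hu.finalRun_encode]
  exact map_range_eq_blockList hu.lt_valley.le hu.le_length
    (hu.upDownUp.strictMonoOn_Icc_left.mono fun p ⟨h₁, h₂⟩ => ⟨h₁, by omega⟩)
    (hu.upDownUp.strictAntiOn_Icc.mono fun p ⟨h₁, h₂⟩ => ⟨by omega, by omega⟩)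
    (hu.upDownUp.strictMonoOn_Icc_right.mono fun p ⟨h₁, h₂⟩ => ⟨by omega, by omega⟩)

end PeakValleyWord

end Encode

theorem exists_mem_peakData_decode_eq {n k : ℕ} (hk : 1 ≤ k) (hkn : k < n)
    {π : Equiv.Perm (Fin n)} (hπ : sPeakSetHat n π = {k}) :
    ∃ d ∈ peakData n k, decode n d = π := by
  obtain ⟨j, hkj, hjn, h⟩ := (sPeakSetHat_eq_singleton_iff_upDownUp π hk hkn).mp hπ
  have hu : PeakValleyWord (word π) k j n :=
    ⟨hk, hkj, hjn, h, word_injOn π, image_word_range π⟩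
  have hword := word_eq_getD_map_range π
  rw [hu.map_range_eq_blockList_encode] at hword
  exact ⟨_, hu.encode_mem_peakData,
    word_injective ((word_decode hu.encode_mem_peakData).trans hword.symm)⟩

theorem PPhat_singleton_eq_card_peakData {n k : ℕ} (hk : 1 ≤ k) (hkn : k < n) :
    PPhat n {k} = #(peakData n k) := by
  refine (card_nbij (decode n) (fun d hd => mem_filter.mpr ⟨mem_univ _, ?_⟩) (decode_injOn hk)
    fun π hπ => ?_).symm
  · exact sPeakSetHat_decode hk hd
  · obtain ⟨d, hd, rfl⟩ := exists_mem_peakData_decode_eq hk hkn (mem_filter.mp hπ).2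
    exact ⟨d, hd, rfl⟩

end SinglePeak

/-- `#P̂({n-m},n) = Σ_{i=0}^{m-1} 2^i·C(n-(m-i), i+1)`. -/
theorem stmt18 (n m : ℕ) (h1 : 1 ≤ m) (hm : m ≤ n - 1) :
    PPhat n {n - m} = ∑ i ∈ Finset.range m, 2 ^ i * Nat.choose (n - (m - i)) (i + 1) := by
  rw [SinglePeak.PPhat_singleton_eq_card_peakData (by omega) (by omega),
    SinglePeak.card_peakData (by omega),
    sum_Ico_eq_sum_range, show n - (n - m) = m by omega]
  refine sum_congr rfl fun i hi => ?_
  have hi := mem_range.mp hi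
  rw [mul_comm, show n - m + i = n - (m - i) by omega, show n - (m - i) - (n - m) = i by omega,
    Nat.choose_symm_of_eq_add (show n - (m - i) = n - m - 1 + (i + 1) by omega)]
end

section
/- With the convention π_0 = 0, for admissible S ⊆ {1,...,n-1}, the number #\widehat{P}(S,n) of permutations of {1,...,n} with peak set S is even if and only if S contains an even number. -/
open Finset

section Aux19

lemma even_card_invol {α : Type*} [DecidableEq α] :
    ∀ (m : ℕ) (s : Finset α) (f : α → α), s.card ≤ m →
      (∀ x ∈ s, f x ∈ s) → (∀ x ∈ s, f (f x) = x) → (∀ x ∈ s, f x ≠ x) →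
      Even s.card := by
  intro m
  induction m with
  | zero =>
      intro s f hc _ _ _
      have : s.card = 0 := Nat.le_zero.mp hc
      simp [this]
  | succ m ih =>
      intro s f hc h1 h2 h3
      rcases s.eq_empty_or_nonempty with rfl | ⟨x, hx⟩
      · simp
      · have hfx : f x ∈ s := h1 x hx
        have hne : f x ≠ x := h3 x hx
        set t := (s.erase x).erase (f x) with ht
        have hmem : ∀ y, y ∈ t ↔ y ∈ s ∧ y ≠ f x ∧ y ≠ x := by
          intro y
          simp only [ht, Finset.mem_erase]
          tauto
        have hcard2 : 2 ≤ s.card := Finset.one_lt_card.mpr ⟨x, hx, f x, hfx, Ne.symm hne⟩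
        have hct : t.card = s.card - 2 := by
          rw [ht, Finset.card_erase_of_mem (Finset.mem_erase.mpr ⟨hne, hfx⟩),
            Finset.card_erase_of_mem hx]
          omega
        have hteven : Even t.card := by
          apply ih t f (by omega) ?_ ?_ ?_
          · intro y hy
            rcases (hmem y).mp hy with ⟨hys, hy1, hy2⟩
            refine (hmem (f y)).mpr ⟨h1 y hys, ?_, ?_⟩
            · intro h
              exact hy2 (by rw [← h2 y hys, h, h2 x hx])
            · intro h
              exact hy1 (by rw [← h2 y hys, h])
          · intro y hy; exact h2 y ((hmem y).mp hy).1
          · intro y hy; exact h3 y ((hmem y).mp hy).1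
        have : s.card = t.card + 2 := by omega
        rw [this]
        exact hteven.add (by decide)

lemma svalHat_eq (n : ℕ) (π : Equiv.Perm (Fin n)) {j : ℕ} (h1 : 1 ≤ j) (h2 : j ≤ n) :
    svalHat n π j = (((π ⟨j - 1, by omega⟩ : Fin n) : ℕ) : ℤ) + 1 := by
  have hj : j ≠ 0 := by omega
  have hlt : j - 1 < n := by omega
  simp [svalHat, sval, hj, hlt]

lemma svalHat_succ (n : ℕ) (π : Equiv.Perm (Fin n)) (i : Fin n) :
    svalHat n π ((i : ℕ) + 1) = (((π i : Fin n) : ℕ) : ℤ) + 1 := by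
  have hlt : (i:ℕ) + 1 - 1 < n := by omega
  have hne : (i:ℕ) + 1 ≠ 0 := by omega
  have hfin : (⟨(i:ℕ) + 1 - 1, hlt⟩ : Fin n) = i := by ext; simp
  simp [svalHat, sval, hne, hlt, hfin]

lemma svalHat_zero (n : ℕ) (π : Equiv.Perm (Fin n)) : svalHat n π 0 = 0 := rfl

lemma svalHat_gt (n : ℕ) (π : Equiv.Perm (Fin n)) {j : ℕ} (h : n < j) : svalHat n π j = 0 := by
  have h1 : ¬ (j - 1 < n) := by omega
  have h2 : j ≠ 0 := by omega
  simp [svalHat, sval, h1, h2]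

lemma mem_sPeakSetHat (n : ℕ) (π : Equiv.Perm (Fin n)) (j : ℕ) :
    j ∈ sPeakSetHat n π ↔ (1 ≤ j ∧ j ≤ n - 1) ∧
      (svalHat n π (j - 1) < svalHat n π j ∧ svalHat n π (j + 1) < svalHat n π j) := by
  simp [sPeakSetHat, Finset.mem_filter, Finset.mem_Icc]

lemma pref_val_big {n m : ℕ} {π : Equiv.Perm (Fin n)}
    (hπ : ∀ i : Fin n, (i : ℕ) < m → π i = i) (i : Fin n) (hi : m ≤ (i : ℕ)) :
    m ≤ ((π i : Fin n) : ℕ) := by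
  by_contra hlt
  push_neg at hlt
  have h1 : π (π i) = π i := hπ _ hlt
  have := π.injective h1
  omega

end Aux19
section Aux19b

lemma svalHat_eq' (n : ℕ) (π : Equiv.Perm (Fin n)) {j : ℕ} (h1 : 1 ≤ j) (h2 : j - 1 < n) :
    svalHat n π j = (((π ⟨j - 1, h2⟩ : Fin n) : ℕ) : ℤ) + 1 := by
  have hj : j ≠ 0 := by omega
  simp [svalHat, sval, hj, h2]

lemma peakSet_swap_eq (n t : ℕ) (v w : Fin n) (hv : (v : ℕ) = 2*t) (hw : (w : ℕ) = 2*t+1)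
    (π : Equiv.Perm (Fin n)) (hπ : ∀ i : Fin n, (i : ℕ) < 2*t → π i = i)
    (hbad1 : ¬ (((π.symm v : Fin n) : ℕ) = 2*t ∧ ((π.symm w : Fin n) : ℕ) = 2*t+1))
    (hbad2 : ¬ (((π.symm w : Fin n) : ℕ) = 2*t ∧ ((π.symm v : Fin n) : ℕ) = 2*t+1)) :
    sPeakSetHat n (Equiv.swap v w * π) = sPeakSetHat n π := by
  have hn : 2*t+1 < n := by have := w.isLt; omega
  set σ : Equiv.Perm (Fin n) := Equiv.swap v w * π with hσ
  set f := svalHat n π with hf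
  set g := svalHat n σ with hg
  set P : ℕ := ((π.symm v : Fin n) : ℕ) + 1 with hP
  set Q : ℕ := ((π.symm w : Fin n) : ℕ) + 1 with hQ
  have hvw : v ≠ w := fun h => by rw [h, hw] at hv; omega
  have hbad1' : ¬ (P = 2*t+1 ∧ Q = 2*t+2) := fun ⟨a, b⟩ => hbad1 ⟨by omega, by omega⟩
  have hbad2' : ¬ (Q = 2*t+1 ∧ P = 2*t+2) := fun ⟨a, b⟩ => hbad2 ⟨by omega, by omega⟩
  have hPn : P ≤ n := by have := (π.symm v).isLt; omega
  have hQn : Q ≤ n := by have := (π.symm w).isLt; omega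
  have hPlow : 2*t+1 ≤ P := by
    by_contra h
    push_neg at h
    have h' : ((π.symm v : Fin n) : ℕ) < 2*t := by omega
    have h2 := hπ (π.symm v) h'
    rw [Equiv.apply_symm_apply] at h2
    have : ((π.symm v : Fin n) : ℕ) = 2*t := by rw [← h2, hv]
    omega
  have hQlow : 2*t+1 ≤ Q := by
    by_contra h
    push_neg at h
    have h' : ((π.symm w : Fin n) : ℕ) < 2*t := by omega
    have h2 := hπ (π.symm w) h'
    rw [Equiv.apply_symm_apply] at h2
    have : ((π.symm w : Fin n) : ℕ) = 2*t+1 := by rw [← h2, hw]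
    omega
  have hPQ : P ≠ Q := by
    intro h
    exact hvw (π.symm.injective (Fin.ext (by omega)))
  have hfP : f P = 2*t+1 := by
    rw [hf, hP, svalHat_succ, Equiv.apply_symm_apply, hv]
    push_cast; ring
  have hfQ : f Q = 2*t+2 := by
    rw [hf, hQ, svalHat_succ, Equiv.apply_symm_apply, hw]
    push_cast; ring
  have hgP : g P = 2*t+2 := by
    rw [hg, hP, svalHat_succ]
    have hx : σ (π.symm v) = w := by
      rw [hσ, Equiv.Perm.mul_apply, Equiv.apply_symm_apply, Equiv.swap_apply_left]
    rw [hx, hw]; push_cast; ring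
  have hgQ : g Q = 2*t+1 := by
    rw [hg, hQ, svalHat_succ]
    have hx : σ (π.symm w) = v := by
      rw [hσ, Equiv.Perm.mul_apply, Equiv.apply_symm_apply, Equiv.swap_apply_right]
    rw [hx, hv]; push_cast; ring
  have hout : ∀ j, j ≠ P → j ≠ Q → g j = f j := by
    intro j hjP hjQ
    rcases Nat.eq_zero_or_pos j with rfl | hj1
    · rw [hf, hg]; rfl
    rcases le_or_gt j n with hjn | hjn
    · have h' : j - 1 < n := by omega
      rw [hf, hg, svalHat_eq' n π hj1 h', svalHat_eq' n σ hj1 h']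
      have hne1 : π ⟨j-1, h'⟩ ≠ v := by
        intro h
        apply hjP
        have hs : π.symm v = ⟨j-1, h'⟩ := by rw [← h, Equiv.symm_apply_apply]
        rw [hP, hs]
        simp
        omega
      have hne2 : π ⟨j-1, h'⟩ ≠ w := by
        intro h
        apply hjQ
        have hs : π.symm w = ⟨j-1, h'⟩ := by rw [← h, Equiv.symm_apply_apply]
        rw [hQ, hs]
        simp
        omega
      have hx : σ ⟨j-1, h'⟩ = π ⟨j-1, h'⟩ := by
        rw [hσ, Equiv.Perm.mul_apply, Equiv.swap_apply_of_ne_of_ne hne1 hne2]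
      rw [hx]
    · rw [hf, hg, svalHat_gt _ _ hjn, svalHat_gt _ _ hjn]
  have hsmall : ∀ j, 1 ≤ j → j ≤ 2*t → f j = (j : ℤ) := by
    intro j h1 h2
    have h' : j - 1 < n := by omega
    rw [hf, svalHat_eq' n π h1 h']
    have hx : π ⟨j-1, h'⟩ = ⟨j-1, h'⟩ := hπ _ (show j - 1 < 2*t by omega)
    rw [hx]
    show ((j - 1 : ℕ) : ℤ) + 1 = (j : ℤ)
    omega
  have hbigf : ∀ j, 2*t+1 ≤ j → j ≤ n → j ≠ P → j ≠ Q → (2*t+3 : ℤ) ≤ f j := by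
    intro j h1 h2 hjP hjQ
    have h' : j - 1 < n := by omega
    rw [hf, svalHat_eq' n π (by omega) h']
    have hge : 2*t ≤ ((π ⟨j-1, h'⟩ : Fin n) : ℕ) :=
      pref_val_big hπ _ (show 2*t ≤ j - 1 by omega)
    have hne1 : ((π ⟨j-1, h'⟩ : Fin n) : ℕ) ≠ 2*t := by
      intro h
      apply hjP
      have hveq : π ⟨j-1, h'⟩ = v := Fin.ext (by rw [h, hv])
      have hs : π.symm v = ⟨j-1, h'⟩ := by rw [← hveq, Equiv.symm_apply_apply]
      rw [hP, hs]
      simp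
      omega
    have hne2 : ((π ⟨j-1, h'⟩ : Fin n) : ℕ) ≠ 2*t+1 := by
      intro h
      apply hjQ
      have hveq : π ⟨j-1, h'⟩ = w := Fin.ext (by rw [h, hw])
      have hs : π.symm w = ⟨j-1, h'⟩ := by rw [← hveq, Equiv.symm_apply_apply]
      rw [hQ, hs]
      simp
      omega
    omega
  have hclass : ∀ j, j ≠ P → j ≠ Q → f j ≤ 2*t ∨ (2*t+3 : ℤ) ≤ f j := by
    intro j hjP hjQ
    rcases Nat.eq_zero_or_pos j with rfl | h1
    · left; rw [hf]; show (0:ℤ) ≤ 2*t; positivity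
    rcases le_or_gt j n with h2 | h2
    · rcases le_or_gt j (2*t) with h3 | h3
      · left; rw [hsmall j h1 h3]; omega
      · right; exact hbigf j (by omega) h2 hjP hjQ
    · left; rw [hf, svalHat_gt _ _ h2]; positivity
  have hcmp : ∀ a b : ℕ, ((a ≠ P ∧ a ≠ Q) ∨ (b ≠ P ∧ b ≠ Q)) → (f a < f b ↔ g a < g b) := by
    intro a b hab
    by_cases haP : a = P
    · have hb : b ≠ P ∧ b ≠ Q := by
        rcases hab with ⟨h, -⟩ | h
        · exact absurd haP h
        · exact h
      have h1 := hclass b hb.1 hb.2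
      have h2 := hout b hb.1 hb.2
      rw [haP, hfP, hgP]
      omega
    by_cases haQ : a = Q
    · have hb : b ≠ P ∧ b ≠ Q := by
        rcases hab with ⟨-, h⟩ | h
        · exact absurd haQ h
        · exact h
      have h1 := hclass b hb.1 hb.2
      have h2 := hout b hb.1 hb.2
      rw [haQ, hfQ, hgQ]
      omega
    by_cases hbP : b = P
    · have h1 := hclass a haP haQ
      have h2 := hout a haP haQ
      rw [hbP, hfP, hgP]
      omega
    by_cases hbQ : b = Q
    · have h1 := hclass a haP haQ
      have h2 := hout a haP haQ
      rw [hbQ, hfQ, hgQ]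
      omega
    · rw [hout a haP haQ, hout b hbP hbQ]
  have main : ∀ j, 1 ≤ j → j ≤ n - 1 →
      ((f (j-1) < f j ∧ f (j+1) < f j) ↔ (g (j-1) < g j ∧ g (j+1) < g j)) := by
    intro j h1 h2
    have hn2 : 2 ≤ n := by omega
    by_cases c1 : j - 1 = P ∧ j = Q
    · obtain ⟨e1, e2⟩ := c1
      have hj1 : j + 1 ≠ P := by omega
      have hj2 : j + 1 ≠ Q := by omega
      have hb := hbigf (j+1) (by omega) (by omega) hj1 hj2
      have ho := hout (j+1) hj1 hj2
      have hfj : f j = 2*t+2 := by rw [e2, hfQ]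
      have hgj : g j = 2*t+1 := by rw [e2, hgQ]
      constructor
      · rintro ⟨-, h⟩; exfalso; omega
      · rintro ⟨-, h⟩; exfalso; omega
    by_cases c2 : j - 1 = Q ∧ j = P
    · obtain ⟨e1, e2⟩ := c2
      have hj1 : j + 1 ≠ P := by omega
      have hj2 : j + 1 ≠ Q := by omega
      have hb := hbigf (j+1) (by omega) (by omega) hj1 hj2
      have ho := hout (j+1) hj1 hj2
      have hfj : f j = 2*t+1 := by rw [e2, hfP]
      have hgj : g j = 2*t+2 := by rw [e2, hgP]
      constructor
      · rintro ⟨-, h⟩; exfalso; omega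
      · rintro ⟨-, h⟩; exfalso; omega
    by_cases c3 : j = P ∧ j + 1 = Q
    · obtain ⟨e1, e2⟩ := c3
      have hj1 : j - 1 ≠ P := by omega
      have hj2 : j - 1 ≠ Q := by omega
      have hjlow : 2*t+1 ≤ j - 1 := by omega
      have hb := hbigf (j-1) hjlow (by omega) hj1 hj2
      have ho := hout (j-1) hj1 hj2
      have hfj : f j = 2*t+1 := by rw [e1, hfP]
      have hgj : g j = 2*t+2 := by rw [e1, hgP]
      constructor
      · rintro ⟨h, -⟩; exfalso; omega
      · rintro ⟨h, -⟩; exfalso; omega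
    by_cases c4 : j = Q ∧ j + 1 = P
    · obtain ⟨e1, e2⟩ := c4
      have hj1 : j - 1 ≠ P := by omega
      have hj2 : j - 1 ≠ Q := by omega
      have hjlow : 2*t+1 ≤ j - 1 := by omega
      have hb := hbigf (j-1) hjlow (by omega) hj1 hj2
      have ho := hout (j-1) hj1 hj2
      have hfj : f j = 2*t+2 := by rw [e1, hfQ]
      have hgj : g j = 2*t+1 := by rw [e1, hgQ]
      constructor
      · rintro ⟨h, -⟩; exfalso; omega
      · rintro ⟨h, -⟩; exfalso; omega
    · have d1 : (j - 1 ≠ P ∧ j - 1 ≠ Q) ∨ (j ≠ P ∧ j ≠ Q) := by omega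
      have d2 : (j + 1 ≠ P ∧ j + 1 ≠ Q) ∨ (j ≠ P ∧ j ≠ Q) := by omega
      exact and_congr (hcmp (j-1) j d1) (hcmp (j+1) j d2)
  ext j
  simp only [mem_sPeakSetHat, ← hf, ← hg]
  constructor
  · rintro ⟨hj, hpk⟩
    exact ⟨hj, (main j hj.1 hj.2).mpr hpk⟩
  · rintro ⟨hj, hpk⟩
    exact ⟨hj, (main j hj.1 hj.2).mp hpk⟩

end Aux19b
section Aux19c

lemma peaks_big {n t : ℕ} (ρ : Equiv.Perm (Fin n)) (hρ : ∀ i : Fin n, (i : ℕ) < 2*t+2 → ρ i = i) :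
    ∀ j ∈ sPeakSetHat n ρ, 2*t+2 < j := by
  intro j hj
  rw [mem_sPeakSetHat] at hj
  obtain ⟨⟨h1, h2⟩, -, hpk⟩ := hj
  by_contra hle
  push_neg at hle
  have hn2 : 2 ≤ n := by omega
  have h' : j - 1 < n := by omega
  have h'' : j + 1 - 1 < n := by omega
  have hfj : svalHat n ρ j = (j : ℤ) := by
    rw [svalHat_eq' n ρ h1 h']
    rw [hρ _ (show ((⟨j-1, h'⟩ : Fin n) : ℕ) < 2*t+2 by show j - 1 < 2*t+2; omega)]
    show ((j - 1 : ℕ) : ℤ) + 1 = (j : ℤ)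
    omega
  have hfj1 : (j : ℤ) < svalHat n ρ (j+1) := by
    rw [svalHat_eq' n ρ (by omega) h'']
    rcases le_or_gt (j+1) (2*t+2) with hc | hc
    · rw [hρ _ (show ((⟨j+1-1, h''⟩ : Fin n) : ℕ) < 2*t+2 by show j + 1 - 1 < 2*t+2; omega)]
      show (j : ℤ) < ((j + 1 - 1 : ℕ) : ℤ) + 1
      omega
    · have := pref_val_big hρ (⟨j+1-1, h''⟩ : Fin n) (show 2*t+2 ≤ j+1-1 by omega)
      omega
  omega

lemma peakSet_swap_insert (n t : ℕ) (v w : Fin n) (hv : (v : ℕ) = 2*t) (hw : (w : ℕ) = 2*t+1)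
    (ρ : Equiv.Perm (Fin n)) (hρ : ∀ i : Fin n, (i : ℕ) < 2*t+2 → ρ i = i) :
    sPeakSetHat n (Equiv.swap v w * ρ) = insert (2*t+1) (sPeakSetHat n ρ) := by
  have hn : 2*t+1 < n := by have := w.isLt; omega
  set σ : Equiv.Perm (Fin n) := Equiv.swap v w * ρ with hσ
  have hsymv : ρ.symm v = v := by
    rw [Equiv.symm_apply_eq]
    exact (hρ v (by omega)).symm
  have hsymw : ρ.symm w = w := by
    rw [Equiv.symm_apply_eq]
    exact (hρ w (by omega)).symm
  have hout : ∀ j, j ≠ 2*t+1 → j ≠ 2*t+2 → svalHat n σ j = svalHat n ρ j := by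
    intro j hj1 hj2
    rcases Nat.eq_zero_or_pos j with rfl | hj0
    · rfl
    rcases le_or_gt j n with hjn | hjn
    · have h' : j - 1 < n := by omega
      rw [svalHat_eq' n ρ hj0 h', svalHat_eq' n σ hj0 h']
      have hne1 : ρ ⟨j-1, h'⟩ ≠ v := by
        intro h
        have hh := congrArg ρ.symm h
        rw [Equiv.symm_apply_apply, hsymv] at hh
        have := congrArg Fin.val hh
        simp at this
        omega
      have hne2 : ρ ⟨j-1, h'⟩ ≠ w := by
        intro h
        have hh := congrArg ρ.symm h
        rw [Equiv.symm_apply_apply, hsymw] at hh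
        have := congrArg Fin.val hh
        simp at this
        omega
      have hx : σ ⟨j-1, h'⟩ = ρ ⟨j-1, h'⟩ := by
        rw [hσ, Equiv.Perm.mul_apply, Equiv.swap_apply_of_ne_of_ne hne1 hne2]
      rw [hx]
    · rw [svalHat_gt _ _ hjn, svalHat_gt _ _ hjn]
  have hfsmall : ∀ j, 1 ≤ j → j ≤ 2*t+2 → svalHat n ρ j = (j : ℤ) := by
    intro j h1 h2
    have h' : j - 1 < n := by omega
    rw [svalHat_eq' n ρ h1 h']
    rw [hρ _ (show ((⟨j-1, h'⟩ : Fin n) : ℕ) < 2*t+2 by show j - 1 < 2*t+2; omega)]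
    show ((j - 1 : ℕ) : ℤ) + 1 = (j : ℤ)
    omega
  have hg1 : svalHat n σ (2*t+1) = 2*t+2 := by
    have h' : 2*t+1-1 < n := by omega
    rw [svalHat_eq' n σ (by omega) h']
    have hfin : (⟨2*t+1-1, h'⟩ : Fin n) = v := by
      ext
      show 2*t+1-1 = (v : ℕ)
      omega
    rw [hfin]
    have hx : σ v = w := by
      rw [hσ, Equiv.Perm.mul_apply, hρ v (by omega), Equiv.swap_apply_left]
    rw [hx, hw]
    push_cast; ring
  have hg2 : svalHat n σ (2*t+2) = 2*t+1 := by
    have h' : 2*t+2-1 < n := by omega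
    rw [svalHat_eq' n σ (by omega) h']
    have hfin : (⟨2*t+2-1, h'⟩ : Fin n) = w := by
      ext
      show 2*t+2-1 = (w : ℕ)
      omega
    rw [hfin]
    have hx : σ w = v := by
      rw [hσ, Equiv.Perm.mul_apply, hρ w (by omega), Equiv.swap_apply_right]
    rw [hx, hv]
    push_cast; ring
  have hgsmall : ∀ j, 1 ≤ j → j ≤ 2*t → svalHat n σ j = (j : ℤ) := by
    intro j h1 h2
    rw [hout j (by omega) (by omega)]
    exact hfsmall j h1 (by omega)
  have hfbig : ∀ j, 2*t+3 ≤ j → j ≤ n → (2*t+3 : ℤ) ≤ svalHat n ρ j := by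
    intro j h1 h2
    have h' : j - 1 < n := by omega
    rw [svalHat_eq' n ρ (by omega) h']
    have := pref_val_big hρ (⟨j-1, h'⟩ : Fin n) (show 2*t+2 ≤ j-1 by omega)
    omega
  ext j
  simp only [Finset.mem_insert, mem_sPeakSetHat]
  by_cases hjI : 1 ≤ j ∧ j ≤ n - 1
  swap
  · constructor
    · rintro ⟨hj, -⟩; exact absurd hj hjI
    · rintro (rfl | ⟨hj, -⟩)
      · exact absurd ⟨by omega, by omega⟩ hjI
      · exact absurd hj hjI
  obtain ⟨h1, h2⟩ := hjI
  have hn2 : 2 ≤ n := by omega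
  rcases lt_trichotomy j (2*t+1) with hc | hc | hc
  · -- j ≤ 2t : no peak on either side
    have hgj : svalHat n σ j = (j : ℤ) := hgsmall j h1 (by omega)
    have hfj : svalHat n ρ j = (j : ℤ) := hfsmall j h1 (by omega)
    have hgj1 : (j : ℤ) < svalHat n σ (j+1) := by
      rcases le_or_gt (j+1) (2*t) with hd | hd
      · rw [hgsmall (j+1) (by omega) hd]; omega
      · have he : j + 1 = 2*t+1 := by omega
        rw [he, hg1]; omega
    have hfj1 : (j : ℤ) < svalHat n ρ (j+1) := by
      rw [hfsmall (j+1) (by omega) (by omega)]; omega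
    constructor
    · rintro ⟨-, -, hpk⟩; exfalso; omega
    · rintro (he | ⟨-, -, hpk⟩)
      · exfalso; omega
      · exfalso; omega
  · -- j = 2t+1 : peak on left, and j = 2t+1 on right
    constructor
    · intro _; exact Or.inl hc
    · intro _
      refine ⟨⟨h1, h2⟩, ?_, ?_⟩
      · have hgj : svalHat n σ j = 2*t+2 := by rw [hc]; exact hg1
        have hgj0 : svalHat n σ (j-1) = 2*t := by
          rcases Nat.eq_zero_or_pos t with rfl | ht
          · rw [hc]
            show svalHat n σ 0 = 2*0
            norm_num [svalHat]
          · have : j - 1 = 2*t := by omega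
            rw [this, hgsmall (2*t) (by omega) (le_refl _)]
            push_cast; ring
        omega
      · have hgj : svalHat n σ j = 2*t+2 := by rw [hc]; exact hg1
        have hgj1 : svalHat n σ (j+1) = 2*t+1 := by
          have : j + 1 = 2*t+2 := by omega
          rw [this, hg2]
        omega
  · rcases Nat.lt_or_ge j (2*t+3) with hd | hd
    · -- j = 2t+2 : no peak on either side
      have he : j = 2*t+2 := by omega
      have hgj0 : svalHat n σ (j-1) = 2*t+2 := by
        have : j - 1 = 2*t+1 := by omega
        rw [this, hg1]
      have hgj : svalHat n σ j = 2*t+1 := by rw [he, hg2]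
      have hfj : svalHat n ρ j = 2*t+2 := by
        rw [hfsmall j (by omega) (by omega), he]; push_cast; ring
      have hfj1 : (2*t+3 : ℤ) ≤ svalHat n ρ (j+1) := hfbig (j+1) (by omega) (by omega)
      constructor
      · rintro ⟨-, hpk, -⟩; exfalso; omega
      · rintro (he' | ⟨-, -, hpk⟩)
        · exfalso; omega
        · exfalso; omega
    · -- j ≥ 2t+3
      have e0 : svalHat n σ j = svalHat n ρ j := hout j (by omega) (by omega)
      have e2 : svalHat n σ (j+1) = svalHat n ρ (j+1) := hout (j+1) (by omega) (by omega)
      by_cases hj3 : j = 2*t+3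
      · have hfj : (2*t+3 : ℤ) ≤ svalHat n ρ j := hfbig j (by omega) (by omega)
        have e1g : svalHat n σ (j-1) = 2*t+1 := by
          have : j - 1 = 2*t+2 := by omega
          rw [this, hg2]
        have e1f : svalHat n ρ (j-1) = 2*t+2 := by
          have : j - 1 = 2*t+2 := by omega
          rw [this, hfsmall (2*t+2) (by omega) (le_refl _)]
          push_cast; ring
        constructor
        · rintro ⟨-, -, hpk⟩
          exact Or.inr ⟨⟨h1, h2⟩, by omega, by omega⟩
        · rintro (he' | ⟨-, -, hpk⟩)
          · exfalso; omega
          · exact ⟨⟨h1, h2⟩, by omega, by omega⟩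
      · have e1 : svalHat n σ (j-1) = svalHat n ρ (j-1) := hout (j-1) (by omega) (by omega)
        constructor
        · rintro ⟨hj, hp1, hp2⟩
          exact Or.inr ⟨hj, by omega, by omega⟩
        · rintro (he' | ⟨hj, hp1, hp2⟩)
          · exfalso; omega
          · exact ⟨hj, by omega, by omega⟩

end Aux19c
section Aux19d

def Fset (n : ℕ) (S : Finset ℕ) : Finset (Equiv.Perm (Fin n)) :=
  Finset.univ.filter fun π => sPeakSetHat n π = S

def Aset (n t : ℕ) : Finset (Equiv.Perm (Fin n)) :=
  Finset.univ.filter fun π => ∀ i : Fin n, (i : ℕ) < 2*t → π i = i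

lemma mem_Fset {n : ℕ} {S : Finset ℕ} {π : Equiv.Perm (Fin n)} :
    π ∈ Fset n S ↔ sPeakSetHat n π = S := by simp [Fset]

lemma mem_Aset {n t : ℕ} {π : Equiv.Perm (Fin n)} :
    π ∈ Aset n t ↔ ∀ i : Fin n, (i : ℕ) < 2*t → π i = i := by simp [Aset]

lemma base19 (n t : ℕ) (S : Finset ℕ) (hn : n ≤ 2*t+1)
    (hS : S ⊆ Finset.Icc 1 (n-1)) (hbig : ∀ i ∈ S, 2*t < i) :
    Even ((Aset n t ∩ Fset n S).card) ↔ ∃ i ∈ S, Even i := by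
  have hSempty : S = ∅ := by
    ext i
    simp only [Finset.notMem_empty, iff_false]
    intro hi
    have h1 := Finset.mem_Icc.mp (hS hi)
    have := hbig i hi
    omega
  subst hSempty
  have hA : Aset n t = {1} := by
    ext π
    simp only [mem_Aset, Finset.mem_singleton]
    constructor
    · intro h
      apply Equiv.ext
      intro i
      rw [Equiv.Perm.one_apply]
      rcases lt_or_ge (i : ℕ) (2*t) with hi | hi
      · exact h i hi
      · have h2 := pref_val_big h i hi
        have h3 := (π i).isLt
        have h4 := i.isLt
        exact Fin.ext (by omega)
    · rintro rfl i hi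
      rfl
  have hid : sPeakSetHat n (1 : Equiv.Perm (Fin n)) = ∅ := by
    ext j
    simp only [mem_sPeakSetHat, Finset.notMem_empty, iff_false]
    rintro ⟨⟨h1, h2⟩, -, hpk⟩
    have hn2 : 2 ≤ n := by omega
    have h' : j - 1 < n := by omega
    have h'' : j + 1 - 1 < n := by omega
    have e1 : svalHat n 1 j = (j : ℤ) := by
      rw [svalHat_eq' n 1 h1 h']
      show ((j - 1 : ℕ) : ℤ) + 1 = (j : ℤ)
      omega
    have e2 : svalHat n 1 (j+1) = ((j : ℤ) + 1) := by
      rw [svalHat_eq' n 1 (by omega) h'']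
      show ((j + 1 - 1 : ℕ) : ℤ) + 1 = (j : ℤ) + 1
      omega
    omega
  have hone : (1 : Equiv.Perm (Fin n)) ∈ Fset n ∅ := mem_Fset.mpr hid
  have : Aset n t ∩ Fset n (∅ : Finset ℕ) = {1} := by
    rw [hA]
    exact Finset.inter_eq_left.mpr (Finset.singleton_subset_iff.mpr hone)
  rw [this]
  simp

end Aux19d
section Aux19e

lemma main19 (n : ℕ) : ∀ (d t : ℕ) (S : Finset ℕ), n - 2*t ≤ d →
    S ⊆ Finset.Icc 1 (n-1) → (∀ i ∈ S, i + 1 ∉ S) → (∀ i ∈ S, 2*t < i) →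
    (Even ((Aset n t ∩ Fset n S).card) ↔ ∃ i ∈ S, Even i) := by
  intro d
  induction d with
  | zero =>
      intro t S hd hS hcons hbig
      exact base19 n t S (by omega) hS hbig
  | succ d ih =>
      intro t S hd hS hcons hbig
      rcases le_or_gt n (2*t+1) with hn | hn
      · exact base19 n t S hn hS hbig
      classical
      set v : Fin n := ⟨2*t, by omega⟩ with hv
      set w : Fin n := ⟨2*t+1, hn⟩ with hw
      have hvval : (v : ℕ) = 2*t := rfl
      have hwval : (w : ℕ) = 2*t+1 := rfl
      set e : Equiv.Perm (Fin n) → Equiv.Perm (Fin n) := fun π => Equiv.swap v w * π with he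
      have hvw : v ≠ w := Fin.ne_of_val_ne (by omega)
      have he2 : ∀ π, e (e π) = π := by
        intro π
        show Equiv.swap v w * (Equiv.swap v w * π) = π
        rw [← mul_assoc, Equiv.swap_mul_self, one_mul]
      have hene : ∀ π, e π ≠ π := by
        intro π h
        have h1 : (e π) (π.symm v) = w := by
          show Equiv.swap v w (π (π.symm v)) = w
          rw [Equiv.apply_symm_apply, Equiv.swap_apply_left]
        rw [h, Equiv.apply_symm_apply] at h1
        exact hvw h1
      have heA : ∀ π, π ∈ Aset n t → e π ∈ Aset n t := by
        intro π hπ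
        rw [mem_Aset] at hπ ⊢
        intro i hi
        show Equiv.swap v w (π i) = i
        rw [hπ i hi]
        exact Equiv.swap_apply_of_ne_of_ne (Fin.ne_of_val_ne (by omega))
          (Fin.ne_of_val_ne (by omega))
      have hpos_iff : ∀ (x y : Fin n) (π : Equiv.Perm (Fin n)),
          ((π.symm x : Fin n) : ℕ) = (y : ℕ) ↔ π y = x := by
        intro x y π
        constructor
        · intro h
          have h2 : π.symm x = y := Fin.ext h
          rw [← h2, Equiv.apply_symm_apply]
        · intro h
          rw [← h, Equiv.symm_apply_apply]
      set bp : Equiv.Perm (Fin n) → Prop :=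
        fun π => (π v = v ∧ π w = w) ∨ (π v = w ∧ π w = v) with hbp
      set X := Aset n t ∩ Fset n S with hX
      have hsplit : (X.filter bp).card + (X.filter (fun π => ¬ bp π)).card = X.card :=
        Finset.card_filter_add_card_filter_not bp
      have hGeven : Even ((X.filter (fun π => ¬ bp π)).card) := by
        apply even_card_invol ((X.filter (fun π => ¬ bp π)).card) _ e le_rfl ?_ ?_ ?_
        · intro π hπ
          rw [Finset.mem_filter] at hπ ⊢
          obtain ⟨hπX, hπbp⟩ := hπ
          rw [hX, Finset.mem_inter] at hπX
          obtain ⟨hπA, hπF⟩ := hπX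
          have hpres : sPeakSetHat n (e π) = sPeakSetHat n π := by
            apply peakSet_swap_eq n t v w hvval hwval π (mem_Aset.mp hπA)
            · rintro ⟨a, b⟩
              exact hπbp (Or.inl ⟨(hpos_iff v v π).mp a, (hpos_iff w w π).mp b⟩)
            · rintro ⟨a, b⟩
              exact hπbp (Or.inr ⟨(hpos_iff w v π).mp a, (hpos_iff v w π).mp b⟩)
          refine ⟨?_, ?_⟩
          · rw [hX, Finset.mem_inter]
            refine ⟨heA π hπA, mem_Fset.mpr ?_⟩
            rw [hpres]
            exact mem_Fset.mp hπF
          · intro hb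
            apply hπbp
            have hev : (e π) v = Equiv.swap v w (π v) := rfl
            have hew : (e π) w = Equiv.swap v w (π w) := rfl
            rcases hb with ⟨a, b⟩ | ⟨a, b⟩
            · right
              rw [hev] at a
              rw [hew] at b
              have a' := congrArg (Equiv.swap v w) a
              have b' := congrArg (Equiv.swap v w) b
              rw [Equiv.swap_apply_self, Equiv.swap_apply_left] at a'
              rw [Equiv.swap_apply_self, Equiv.swap_apply_right] at b'
              exact ⟨a', b'⟩
            · left
              rw [hev] at a
              rw [hew] at b
              have a' := congrArg (Equiv.swap v w) a
              have b' := congrArg (Equiv.swap v w) b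
              rw [Equiv.swap_apply_self, Equiv.swap_apply_right] at a'
              rw [Equiv.swap_apply_self, Equiv.swap_apply_left] at b'
              exact ⟨a', b'⟩
        · intro π _; exact he2 π
        · intro π _; exact hene π
      set B1 := X.filter (fun π => π v = v ∧ π w = w) with hB1
      set B2 := X.filter (fun π => π v = w ∧ π w = v) with hB2
      have hBunion : X.filter bp = B1 ∪ B2 := by
        ext π
        rw [hB1, hB2, Finset.mem_union, Finset.mem_filter, Finset.mem_filter,
          Finset.mem_filter]
        simp only [hbp]
        tauto
      have hBdisj : Disjoint B1 B2 := by
        rw [Finset.disjoint_left]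
        intro π h1 h2
        rw [hB1, Finset.mem_filter] at h1
        rw [hB2, Finset.mem_filter] at h2
        exact hvw (h1.2.1.symm.trans h2.2.1)
      have hBsplit : (X.filter bp).card = B1.card + B2.card := by
        rw [hBunion, Finset.card_union_of_disjoint hBdisj]
      have hB1eq : B1 = Aset n (t+1) ∩ Fset n S := by
        ext π
        rw [hB1, Finset.mem_filter, hX, Finset.mem_inter, Finset.mem_inter,
          mem_Aset, mem_Aset]
        constructor
        · rintro ⟨⟨hA, hF⟩, hvv, hww⟩
          refine ⟨?_, hF⟩
          intro i hi
          rcases lt_or_ge (i : ℕ) (2*t) with h | h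
          · exact hA i h
          · have : (i : ℕ) = 2*t ∨ (i : ℕ) = 2*t+1 := by omega
            rcases this with h' | h'
            · have : i = v := Fin.ext (by rw [h', hvval])
              rw [this]; exact hvv
            · have : i = w := Fin.ext (by rw [h', hwval])
              rw [this]; exact hww
        · rintro ⟨hA, hF⟩
          exact ⟨⟨fun i hi => hA i (by omega), hF⟩,
            hA v (by rw [hvval]; omega), hA w (by rw [hwval]; omega)⟩
      have hApeaks : ∀ π, π ∈ Aset n (t+1) → ∀ j ∈ sPeakSetHat n π, 2*t+2 < j := by
        intro π hπ
        exact peaks_big π (fun i hi => mem_Aset.mp hπ i (by omega))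
      have hB2A : ∀ π ∈ B2, e π ∈ Aset n (t+1) := by
        intro π hπ
        rw [hB2, Finset.mem_filter, hX, Finset.mem_inter] at hπ
        obtain ⟨⟨hπA, -⟩, hvv, hww⟩ := hπ
        rw [mem_Aset]
        intro i hi
        show Equiv.swap v w (π i) = i
        rcases lt_or_ge (i : ℕ) (2*t) with h | h
        · rw [mem_Aset.mp hπA i h]
          exact Equiv.swap_apply_of_ne_of_ne (Fin.ne_of_val_ne (by omega))
            (Fin.ne_of_val_ne (by omega))
        · have : (i : ℕ) = 2*t ∨ (i : ℕ) = 2*t+1 := by omega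
          rcases this with h' | h'
          · have hi' : i = v := Fin.ext (by rw [h', hvval])
            rw [hi', hvv, Equiv.swap_apply_right]
          · have hi' : i = w := Fin.ext (by rw [h', hwval])
            rw [hi', hww, Equiv.swap_apply_left]
      have hB2ins : ∀ π ∈ B2, sPeakSetHat n π = insert (2*t+1) (sPeakSetHat n (e π))
          ∧ 2*t+1 ∉ sPeakSetHat n (e π) := by
        intro π hπ
        have hρA := hB2A π hπ
        have hins := peakSet_swap_insert n t v w hvval hwval (e π)
          (fun i hi => mem_Aset.mp hρA i (by omega))
        have hee : Equiv.swap v w * e π = π := he2 π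
        rw [hee] at hins
        refine ⟨hins, ?_⟩
        intro h
        have := hApeaks _ hρA _ h
        omega
      have hB2peak : ∀ π ∈ B2, sPeakSetHat n π = S := by
        intro π hπ
        rw [hB2, Finset.mem_filter, hX, Finset.mem_inter] at hπ
        exact mem_Fset.mp hπ.1.2
      by_cases hS1 : (2*t+1) ∈ S
      · -- B1 is empty, B2 ≃ Aset (t+1) ∩ Fset (S.erase (2t+1))
        have hB1empty : B1.card = 0 := by
          rw [Finset.card_eq_zero, hB1eq, Finset.eq_empty_iff_forall_notMem]
          intro π hπ
          rw [Finset.mem_inter] at hπ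
          have h1 := hApeaks π hπ.1 (2*t+1) (by rw [mem_Fset.mp hπ.2]; exact hS1)
          omega
        set S' := S.erase (2*t+1) with hS'
        have hB2card : B2.card = (Aset n (t+1) ∩ Fset n S').card := by
          apply Finset.card_bij' (fun π _ => e π) (fun ρ _ => e ρ)
          · intro π hπ
            rw [Finset.mem_inter]
            refine ⟨hB2A π hπ, mem_Fset.mpr ?_⟩
            obtain ⟨hins, hnotin⟩ := hB2ins π hπ
            rw [hS', ← hB2peak π hπ, hins, Finset.erase_insert hnotin]
          · intro ρ hρ
            rw [Finset.mem_inter] at hρ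
            obtain ⟨hρA, hρF⟩ := hρ
            rw [hB2, Finset.mem_filter, hX, Finset.mem_inter]
            have hρA' := mem_Aset.mp hρA
            refine ⟨⟨?_, ?_⟩, ?_, ?_⟩
            · rw [mem_Aset]
              intro i hi
              show Equiv.swap v w (ρ i) = i
              rw [hρA' i (by omega)]
              exact Equiv.swap_apply_of_ne_of_ne (Fin.ne_of_val_ne (by omega))
                (Fin.ne_of_val_ne (by omega))
            · rw [mem_Fset]
              have hins := peakSet_swap_insert n t v w hvval hwval ρ
                (fun i hi => hρA' i (by omega))
              show sPeakSetHat n (Equiv.swap v w * ρ) = S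
              rw [hins, mem_Fset.mp hρF, hS', Finset.insert_erase hS1]
            · show Equiv.swap v w (ρ v) = w
              rw [hρA' v (by rw [hvval]; omega), Equiv.swap_apply_left]
            · show Equiv.swap v w (ρ w) = v
              rw [hρA' w (by rw [hwval]; omega), Equiv.swap_apply_right]
          · intro π _; exact he2 π
          · intro ρ _; exact he2 ρ
        have hS'sub : S' ⊆ Finset.Icc 1 (n-1) := (Finset.erase_subset _ _).trans hS
        have hS'cons : ∀ i ∈ S', i + 1 ∉ S' := by
          intro i hi h
          exact hcons i (Finset.mem_of_mem_erase hi) (Finset.mem_of_mem_erase h)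
        have hS'big : ∀ i ∈ S', 2*(t+1) < i := by
          intro i hi
          have h1 : i ∈ S := Finset.mem_of_mem_erase hi
          have h2 : i ≠ 2*t+1 := Finset.ne_of_mem_erase hi
          have h3 : i ≠ 2*t+2 := by
            intro h
            exact hcons (2*t+1) hS1 (by rw [show 2*t+1+1 = 2*t+2 by omega, ← h]; exact h1)
          have := hbig i h1
          omega
        have hIH := ih (t+1) S' (by omega) hS'sub hS'cons hS'big
        have h2 : (∃ i ∈ S', Even i) ↔ (∃ i ∈ S, Even i) := by
          constructor
          · rintro ⟨i, hi, hev⟩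
            exact ⟨i, Finset.mem_of_mem_erase hi, hev⟩
          · rintro ⟨i, hi, hev⟩
            refine ⟨i, Finset.mem_erase.mpr ⟨?_, hi⟩, hev⟩
            intro h
            rw [h] at hev
            rcases hev with ⟨k, hk⟩
            omega
        rw [← hsplit, Nat.even_add, hBsplit, hB1empty, hB2card, zero_add]
        constructor
        · intro h
          exact h2.mp (hIH.mp (h.mpr hGeven))
        · intro h
          exact ⟨fun _ => hGeven, fun _ => hIH.mpr (h2.mpr h)⟩
      · -- 2t+1 ∉ S : B2 is empty
        have hB2empty : B2.card = 0 := by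
          rw [Finset.card_eq_zero, Finset.eq_empty_iff_forall_notMem]
          intro π hπ
          obtain ⟨hins, -⟩ := hB2ins π hπ
          apply hS1
          rw [← hB2peak π hπ, hins]
          exact Finset.mem_insert_self _ _
        by_cases hS2 : (2*t+2) ∈ S
        · -- both sides true
          have hB1empty : B1.card = 0 := by
            rw [Finset.card_eq_zero, hB1eq, Finset.eq_empty_iff_forall_notMem]
            intro π hπ
            rw [Finset.mem_inter] at hπ
            have h1 := hApeaks π hπ.1 (2*t+2) (by rw [mem_Fset.mp hπ.2]; exact hS2)
            omega
          have hXeven : Even X.card := by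
            rw [← hsplit, hBsplit, hB1empty, hB2empty]
            simpa using hGeven
          exact iff_of_true hXeven ⟨2*t+2, hS2, ⟨t+1, by ring⟩⟩
        · -- recurse with same S
          have hSbig' : ∀ i ∈ S, 2*(t+1) < i := by
            intro i hi
            have h1 : i ≠ 2*t+1 := fun h => hS1 (h ▸ hi)
            have h2 : i ≠ 2*t+2 := fun h => hS2 (h ▸ hi)
            have := hbig i hi
            omega
          have hIH := ih (t+1) S (by omega) hS hcons hSbig'
          rw [← hsplit, Nat.even_add, hBsplit, hB2empty, hB1eq, add_zero]
          constructor
          · intro h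
            exact hIH.mp (h.mpr hGeven)
          · intro h
            exact ⟨fun _ => hGeven, fun _ => hIH.mpr h⟩

end Aux19e

/-- with `π_0 = 0`, `#P̂(S,n)` is even iff `S` contains an even number. -/
theorem stmt19 (n : ℕ) (S : Finset ℕ)
    (hS : S ⊆ Finset.Icc 1 (n - 1)) (hcons : ∀ i ∈ S, i + 1 ∉ S) :
    Even (PPhat n S) ↔ ∃ i ∈ S, Even i := by
  have h0 : Aset n 0 = (Finset.univ : Finset (Equiv.Perm (Fin n))) := by
    apply Finset.filter_true_of_mem
    intro π _ i hi
    exact absurd hi (by omega)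
  have hm := main19 n n 0 S (by omega) hS hcons
    (fun i hi => by have := (Finset.mem_Icc.mp (hS hi)).1; omega)
  rw [h0, Finset.univ_inter] at hm
  show Even ((Finset.univ.filter fun π : Equiv.Perm (Fin n) => sPeakSetHat n π = S).card) ↔ _
  exact hm
end
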